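/- arXiv:2409.12198 — 7 statements merged into one kernel-verified Lean document; each statement's English description precedes it below -/
import Mathlib

section
/- Let H be a finite-dimensional complex inner product space with orthonormal basis v : Fin n → H, and let B_v = { ⨆_{i ∈ S} span ℂ {v i} | S ⊆ Fin n } ⊆ Submodule ℂ H. Then B_v is a maximal Boolean sublattice of Submodule ℂ H: B_v is a Boolean sublattice, and any Boolean sublattice B' of Submodule ℂ H with B_v ⊆ B' equals B_v. -/
open Submodule

/-- A subset `B` of the lattice of subspaces of a complex inner product space is a
*Boolean sublattice* if it contains `⊥` and `⊤`, is closed under `⊓`, `⊔` and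
orthogonal complement, and satisfies the distributive law on its elements. -/
def IsBooleanSublattice {H : Type*} [NormedAddCommGroup H] [InnerProductSpace ℂ H]
    (B : Set (Submodule ℂ H)) : Prop :=
  ⊥ ∈ B ∧ ⊤ ∈ B ∧
  (∀ x ∈ B, ∀ y ∈ B, x ⊓ y ∈ B) ∧
  (∀ x ∈ B, ∀ y ∈ B, x ⊔ y ∈ B) ∧
  (∀ x ∈ B, xᗮ ∈ B) ∧
  (∀ x ∈ B, ∀ y ∈ B, ∀ z ∈ B, x ⊓ (y ⊔ z) = (x ⊓ y) ⊔ (x ⊓ z))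

/-- A Boolean sublattice is *maximal* if it is not properly contained in any other
Boolean sublattice. -/
def IsMaximalBooleanSublattice {H : Type*} [NormedAddCommGroup H] [InnerProductSpace ℂ H]
    (B : Set (Submodule ℂ H)) : Prop :=
  IsBooleanSublattice B ∧ ∀ B' : Set (Submodule ℂ H), IsBooleanSublattice B' → B ⊆ B' → B' = B

section Helpers
set_option linter.unusedSectionVars false

variable {n : ℕ} {H : Type*} [NormedAddCommGroup H] [InnerProductSpace ℂ H]
  [FiniteDimensional ℂ H]

local notation "⟪" x ", " y "⟫" => @inner ℂ _ _ x y

lemma mem_eS (v : OrthonormalBasis (Fin n) ℂ H) (S : Finset (Fin n)) (x : H) :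
    x ∈ (⨆ i ∈ S, span ℂ {v i}) ↔ ∀ i ∉ S, ⟪v i, x⟫ = 0 := by
  constructor
  · intro hx i hi
    have hle : (⨆ j ∈ S, span ℂ {v j}) ≤ (ℂ ∙ v i)ᗮ := by
      refine iSup₂_le fun j hj => ?_
      rw [span_singleton_le_iff_mem, mem_orthogonal_singleton_iff_inner_right]
      exact v.orthonormal.2 (fun h => hi (h ▸ hj))
    exact mem_orthogonal_singleton_iff_inner_right.mp (hle hx)
  · intro h
    rw [← v.sum_repr x]
    refine Submodule.sum_mem _ fun i _ => ?_
    by_cases hi : i ∈ S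
    · exact Submodule.smul_mem _ _
        ((le_iSup₂ (f := fun i _ => span ℂ {v i}) i hi) (mem_span_singleton_self _))
    · simp [v.repr_apply_apply, h i hi]

lemma eS_inf (v : OrthonormalBasis (Fin n) ℂ H) (S T : Finset (Fin n)) :
    (⨆ i ∈ S, span ℂ {v i}) ⊓ (⨆ i ∈ T, span ℂ {v i}) = ⨆ i ∈ S ∩ T, span ℂ {v i} := by
  ext x
  rw [Submodule.mem_inf, mem_eS, mem_eS, mem_eS]
  simp only [Finset.mem_inter, not_and_or]
  exact ⟨fun ⟨h1, h2⟩ i hi => hi.elim (h1 i) (h2 i),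
    fun h => ⟨fun i hi => h i (Or.inl hi), fun i hi => h i (Or.inr hi)⟩⟩

lemma eS_sup (v : OrthonormalBasis (Fin n) ℂ H) (S T : Finset (Fin n)) :
    (⨆ i ∈ S, span ℂ {v i}) ⊔ (⨆ i ∈ T, span ℂ {v i}) = ⨆ i ∈ S ∪ T, span ℂ {v i} := by
  simp_rw [← Finset.sup_eq_iSup, Finset.sup_union]

lemma eS_bot (v : OrthonormalBasis (Fin n) ℂ H) :
    (⨆ i ∈ (∅ : Finset (Fin n)), span ℂ {v i}) = ⊥ := by simp

lemma eS_top (v : OrthonormalBasis (Fin n) ℂ H) :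
    (⨆ i ∈ (Finset.univ : Finset (Fin n)), span ℂ {v i}) = ⊤ := by
  rw [eq_top_iff]
  intro x _
  rw [mem_eS]
  simp

lemma eS_compl (v : OrthonormalBasis (Fin n) ℂ H) (S : Finset (Fin n)) :
    (⨆ i ∈ S, span ℂ {v i})ᗮ = ⨆ i ∈ Sᶜ, span ℂ {v i} := by
  ext x
  rw [mem_eS, Submodule.mem_orthogonal]
  constructor
  · intro h i hi
    refine h (v i) ?_
    simp only [Finset.mem_compl, not_not] at hi
    exact (le_iSup₂ (f := fun i _ => span ℂ {v i}) i hi) (mem_span_singleton_self _)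
  · intro h u hu
    -- u ∈ eS S, x satisfies ⟪v i, x⟫ = 0 for i ∈ S
    rw [← v.sum_repr u]
    rw [sum_inner]
    refine Finset.sum_eq_zero fun i _ => ?_
    by_cases hi : i ∈ S
    · rw [inner_smul_left, h i (by simpa using hi), mul_zero]
    · rw [v.repr_apply_apply, (mem_eS v S u).mp hu i hi, zero_smul, inner_zero_left]

open Classical in
lemma inf_span_singleton_eq (K : Submodule ℂ H) (x : H) (hx : x ≠ 0) :
    K ⊓ span ℂ {x} = if x ∈ K then span ℂ {x} else ⊥ := by
  split_ifs with h
  · exact le_antisymm inf_le_right (le_inf ((span_singleton_le_iff_mem x K).mpr h) le_rfl)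
  · rw [eq_bot_iff]
    rintro y ⟨hyK, hys⟩
    obtain ⟨c, rfl⟩ := mem_span_singleton.mp hys
    rcases eq_or_ne c 0 with rfl | hc
    · simp
    · refine absurd ?_ h
      have h2 := K.smul_mem c⁻¹ hyK
      rwa [smul_smul, inv_mul_cancel₀ hc, one_smul] at h2


end Helpers

/-- The collection of subspaces spanned by subsets of an orthonormal basis of a
finite-dimensional complex inner product space is a maximal Boolean sublattice of
the lattice of subspaces. -/
theorem orthonormalBasis_isMaximalBooleanSublattice {n : ℕ} {H : Type*}
    [NormedAddCommGroup H] [InnerProductSpace ℂ H] [FiniteDimensional ℂ H]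
    (v : OrthonormalBasis (Fin n) ℂ H) :
    IsMaximalBooleanSublattice
      {K : Submodule ℂ H | ∃ S : Finset (Fin n), K = ⨆ i ∈ S, span ℂ {v i}} := by
  classical
  constructor
  · refine ⟨⟨∅, (eS_bot v).symm⟩, ⟨Finset.univ, (eS_top v).symm⟩, ?_, ?_, ?_, ?_⟩
    · rintro x ⟨S, rfl⟩ y ⟨T, rfl⟩
      exact ⟨S ∩ T, eS_inf v S T⟩
    · rintro x ⟨S, rfl⟩ y ⟨T, rfl⟩
      exact ⟨S ∪ T, eS_sup v S T⟩
    · rintro x ⟨S, rfl⟩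
      exact ⟨Sᶜ, eS_compl v S⟩
    · rintro x ⟨S, rfl⟩ y ⟨T, rfl⟩ z ⟨U, rfl⟩
      rw [eS_sup v T U, eS_inf v S (T ∪ U), eS_inf v S T, eS_inf v S U,
        eS_sup v (S ∩ T) (S ∩ U), Finset.inter_union_distrib_left]
  · rintro B' ⟨hbot, htop, hinf, hsup, hcompl, hdist⟩ hsub
    ext K
    simp only [Set.mem_setOf_eq]
    constructor
    · intro hK
      have claim1 : ∀ T : Finset (Fin n),
          K ⊓ (⨆ i ∈ T, span ℂ {v i}) = ⨆ i ∈ T, (K ⊓ span ℂ {v i}) := by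
        intro T
        induction T using Finset.induction_on with
        | empty => simp
        | @insert a T ha ih =>
          rw [Finset.iSup_insert, Finset.iSup_insert, ← ih]
          exact hdist K hK (span ℂ {v a}) (hsub ⟨{a}, by simp⟩)
            (⨆ i ∈ T, span ℂ {v i}) (hsub ⟨T, rfl⟩)
      refine ⟨Finset.univ.filter (fun i => v i ∈ K), le_antisymm ?_ ?_⟩
      · have hKtop : K = ⨆ i ∈ (Finset.univ : Finset (Fin n)), (K ⊓ span ℂ {v i}) := by
          rw [← claim1, eS_top, inf_top_eq]
        refine hKtop.trans_le (iSup₂_le fun i _ => ?_)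
        rw [inf_span_singleton_eq _ _ (v.orthonormal.ne_zero i)]
        split_ifs with h
        · exact le_iSup₂ (f := fun i _ => span ℂ {v i}) i (Finset.mem_filter.mpr ⟨Finset.mem_univ i, h⟩)
        · exact bot_le
      · refine iSup₂_le fun i hi => ?_
        exact (span_singleton_le_iff_mem _ _).mpr (Finset.mem_filter.mp hi).2
    · rintro ⟨S, rfl⟩
      exact hsub ⟨S, rfl⟩
end

section
/- Let H be a finite-dimensional complex inner product space with n = finrank ℂ H ≥ 1. Every maximal Boolean sublattice B of Submodule ℂ H is generated by an orthonormal basis: there exists an orthonormal basis v : Fin n → H such that B = { ⨆_{i ∈ S} span ℂ {v i} | S ⊆ Fin n }. -/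
open scoped ComplexInnerProductSpace
open Module


open Submodule

section AuxiliaryLemmas

variable {H : Type*} [NormedAddCommGroup H] [InnerProductSpace ℂ H] [FiniteDimensional ℂ H]

open Module

variable {H : Type*} [NormedAddCommGroup H] [InnerProductSpace ℂ H] [FiniteDimensional ℂ H]

/-- Componentwise meet for subspaces split along `K ⊕ Kᗮ`. -/
lemma inf_sup_orth (K p p' q q' : Submodule ℂ H)
    (hp : p ≤ Kᗮ) (hp' : p' ≤ Kᗮ) (hq : q ≤ K) (hq' : q' ≤ K) :
    (p ⊔ q) ⊓ (p' ⊔ q') = (p ⊓ p') ⊔ (q ⊓ q') := by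
  refine le_antisymm ?_ (sup_le (le_inf (le_trans inf_le_left le_sup_left)
    (le_trans inf_le_right le_sup_left)) (le_inf (le_trans inf_le_left le_sup_right)
    (le_trans inf_le_right le_sup_right)))
  rintro x ⟨hx1, hx2⟩
  rw [SetLike.mem_coe] at hx1 hx2
  rw [Submodule.mem_sup] at hx1 hx2
  obtain ⟨y, hy, z, hz, rfl⟩ := hx1
  obtain ⟨y', hy', z', hz', hE⟩ := hx2
  have hyy' : y - y' ∈ Kᗮ ⊓ K := by
    constructor
    · exact sub_mem (hp hy) (hp' hy')
    · have : y - y' = z' - z := by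
        have := hE.symm
        linear_combination (norm := abel) this
      rw [this]; exact sub_mem (hq' hz') (hq hz)
  rw [show Kᗮ ⊓ K = ⊥ by rw [inf_comm]; exact K.inf_orthogonal_eq_bot, Submodule.mem_bot,
    sub_eq_zero] at hyy'
  subst hyy'
  have hzz' : z = z' := by
    have := hE.symm
    linear_combination (norm := abel) this
  subst hzz'
  exact Submodule.mem_sup.2 ⟨y, ⟨hy, hy'⟩, z, ⟨hz, hz'⟩, rfl⟩

/-- Componentwise orthogonal complement for subspaces split along `K ⊕ Kᗮ`. -/
lemma orth_sup (K p q : Submodule ℂ H) (hp : p ≤ Kᗮ) (hq : q ≤ K) :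
    (p ⊔ q)ᗮ = (pᗮ ⊓ Kᗮ) ⊔ (qᗮ ⊓ K) := by
  refine le_antisymm ?_ ?_
  · intro x hx
    obtain ⟨y, hy, z, hz, rfl⟩ := Submodule.mem_sup.1
      ((Submodule.sup_orthogonal_of_hasOrthogonalProjection (K := K)) ▸ Submodule.mem_top (x := x))
    have hzp : z ∈ pᗮ := by
      refine (Submodule.mem_orthogonal _ _).2 fun w hw => ?_
      have h1 : ⟪w, y + z⟫ = 0 := (Submodule.mem_orthogonal _ _).1 hx w (le_sup_left (a := p) (b := q) hw)
      have h2 : ⟪w, y⟫ = 0 := Submodule.inner_left_of_mem_orthogonal hy (hp hw)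
      rwa [inner_add_right, h2, zero_add] at h1
    have hyq : y ∈ qᗮ := by
      refine (Submodule.mem_orthogonal _ _).2 fun w hw => ?_
      have h1 : ⟪w, y + z⟫ = 0 := (Submodule.mem_orthogonal _ _).1 hx w (le_sup_right (a := p) (b := q) hw)
      have h2 : ⟪w, z⟫ = 0 := Submodule.inner_right_of_mem_orthogonal (hq hw) hz
      rwa [inner_add_right, h2, add_zero] at h1
    exact Submodule.mem_sup.2 ⟨z, Submodule.mem_inf.2 ⟨hzp, hz⟩, y,
      Submodule.mem_inf.2 ⟨hyq, hy⟩, add_comm z y⟩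
  · refine sup_le ?_ ?_
    · have h1 : p ⊔ q ≤ (pᗮ ⊓ Kᗮ)ᗮ :=
        sup_le (le_trans (Submodule.le_orthogonal_orthogonal p) (Submodule.orthogonal_le inf_le_left))
          (le_trans hq (le_trans (Submodule.le_orthogonal_orthogonal K) (Submodule.orthogonal_le inf_le_right)))
      exact le_trans (Submodule.le_orthogonal_orthogonal _) (Submodule.orthogonal_le h1)
    · have h1 : p ⊔ q ≤ (qᗮ ⊓ K)ᗮ :=
        sup_le (le_trans hp (Submodule.orthogonal_le inf_le_right))
          (le_trans (Submodule.le_orthogonal_orthogonal q) (Submodule.orthogonal_le inf_le_left))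
      exact le_trans (Submodule.le_orthogonal_orthogonal _) (Submodule.orthogonal_le h1)

/-- Relative orthocomplement is involutive. -/
lemma relcompl_relcompl {w a : Submodule ℂ H} (hw : w ≤ a) : (wᗮ ⊓ a)ᗮ ⊓ a = w := by
  have h1 : finrank ℂ w + finrank ℂ ↥(wᗮ ⊓ a) = finrank ℂ a :=
    Submodule.finrank_add_inf_finrank_orthogonal hw
  have h2 : finrank ℂ ↥(wᗮ ⊓ a) + finrank ℂ ↥((wᗮ ⊓ a)ᗮ ⊓ a) = finrank ℂ a :=
    Submodule.finrank_add_inf_finrank_orthogonal inf_le_right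
  have hle : w ≤ (wᗮ ⊓ a)ᗮ ⊓ a :=
    le_inf (le_trans (Submodule.le_orthogonal_orthogonal w) (Submodule.orthogonal_le inf_le_left)) hw
  exact (Submodule.eq_of_le_of_finrank_le hle (by omega)).symm

/-- An atom of `B`: a minimal nonzero element. -/
def MyAtom (B : Set (Submodule ℂ H)) (a : Submodule ℂ H) : Prop :=
  a ∈ B ∧ a ≠ ⊥ ∧ ∀ b ∈ B, b ≤ a → b = ⊥ ∨ b = a

lemma exists_myAtom_le {B : Set (Submodule ℂ H)} {b : Submodule ℂ H}
    (hb : b ∈ B) (hbne : b ≠ ⊥) : ∃ a, MyAtom B a ∧ a ≤ b := by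
  obtain ⟨n, hfr⟩ : ∃ n, finrank ℂ ↥b = n := ⟨_, rfl⟩
  induction n using Nat.strong_induction_on generalizing b with
  | _ n ih =>
    by_cases hA : ∀ c ∈ B, c ≤ b → c = ⊥ ∨ c = b
    · exact ⟨b, ⟨hb, hbne, hA⟩, le_rfl⟩
    · push_neg at hA
      obtain ⟨c, hcB, hcb, hcbot, hcne⟩ := hA
      have hlt : finrank ℂ c < n := by
        subst hfr
        exact Submodule.finrank_lt_finrank_of_lt (lt_of_le_of_ne hcb hcne)
      obtain ⟨a, ha, hac⟩ := ih _ hlt hcB hcbot rfl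
      exact ⟨a, ha, hac.trans hcb⟩

lemma myAtom_le_or_le_orth {B : Set (Submodule ℂ H)} (hB : IsBooleanSublattice B)
    {a b : Submodule ℂ H} (ha : MyAtom B a) (hb : b ∈ B) : a ≤ b ∨ a ≤ bᗮ := by
  obtain ⟨_, _, hinf, _, hcompl, hdist⟩ := hB
  obtain ⟨haB, habot, hamin⟩ := ha
  have h1 : a ⊓ b ∈ B := hinf a haB b hb
  have h2 : a ⊓ bᗮ ∈ B := hinf a haB bᗮ (hcompl b hb)
  have hsum : (a ⊓ b) ⊔ (a ⊓ bᗮ) = a := by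
    rw [← hdist a haB b hb bᗮ (hcompl b hb), Submodule.sup_orthogonal_of_hasOrthogonalProjection, inf_top_eq]
  rcases hamin _ h1 inf_le_left with hbot1 | heq1
  · rcases hamin _ h2 inf_le_left with hbot2 | heq2
    · rw [hbot1, hbot2, sup_idem] at hsum
      exact absurd hsum.symm habot
    · exact Or.inr (inf_eq_left.mp heq2)
  · exact Or.inl (inf_eq_left.mp heq1)

/-- Every element of a Boolean sublattice is a finite sup of atoms. -/
lemma eq_sup_myAtoms {B : Set (Submodule ℂ H)} (hB : IsBooleanSublattice B)
    {b : Submodule ℂ H} (hb : b ∈ B) :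
    ∃ t : Finset (Submodule ℂ H), (∀ x ∈ t, MyAtom B x) ∧ b = t.sup id := by
  classical
  obtain ⟨n, hfr⟩ : ∃ n, finrank ℂ ↥b = n := ⟨_, rfl⟩
  induction n using Nat.strong_induction_on generalizing b with
  | _ n ih =>
    by_cases hbne : b = ⊥
    · exact ⟨∅, by simp, by simp [hbne]⟩
    · obtain ⟨a, ha, hab⟩ := exists_myAtom_le hb hbne
      obtain ⟨_, _, hinf, _, hcompl, hdist⟩ := hB
      have hb' : b ⊓ aᗮ ∈ B := hinf b hb aᗮ (hcompl a ha.1)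
      have hdecomp : b = a ⊔ (b ⊓ aᗮ) := by
        conv_lhs => rw [← inf_top_eq b, ← Submodule.sup_orthogonal_of_hasOrthogonalProjection (K := a),
          hdist b hb a ha.1 aᗮ (hcompl a ha.1), inf_eq_right.mpr hab]
      have hlt : finrank ℂ ↥(b ⊓ aᗮ) < n := by
        subst hfr
        refine Submodule.finrank_lt_finrank_of_lt (lt_of_le_of_ne inf_le_left fun hEq => ?_)
        have : a ≤ aᗮ := le_trans hab (hEq ▸ inf_le_right)
        have : a ≤ ⊥ := by
          rw [← Submodule.inf_orthogonal_eq_bot a]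
          exact le_inf le_rfl this
        exact ha.2.1 (le_bot_iff.mp this)
      obtain ⟨t, ht, htsup⟩ := ih _ hlt hb' rfl
      refine ⟨insert a t, ?_, ?_⟩
      · intro x hx
        rcases Finset.mem_insert.1 hx with rfl | hx
        · exact ha
        · exact ht x hx
      · rw [Finset.sup_insert, id, ← htsup, ← hdecomp]

/-- Distinct atoms are orthogonal. -/
lemma myAtom_orth {B : Set (Submodule ℂ H)} (hB : IsBooleanSublattice B)
    {a a' : Submodule ℂ H} (ha : MyAtom B a) (ha' : MyAtom B a') (hne : a ≠ a') : a ≤ a'ᗮ := by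
  rcases myAtom_le_or_le_orth hB ha ha'.1 with h | h
  · rcases ha'.2.2 a ha.1 h with h1 | h1
    · exact absurd h1 ha.2.1
    · exact absurd h1 hne
  · exact h

/-- Every atom belongs to any atomic decomposition of `⊤`. -/
lemma myAtom_mem_decomp {B : Set (Submodule ℂ H)} (hB : IsBooleanSublattice B)
    {s : Finset (Submodule ℂ H)} (hs : ∀ x ∈ s, MyAtom B x) (hsup : (⊤ : Submodule ℂ H) = s.sup id)
    {a : Submodule ℂ H} (ha : MyAtom B a) : a ∈ s := by
  by_contra hanot
  have h1 : s.sup id ≤ aᗮ := by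
    refine Finset.sup_le fun x hx => ?_
    have hne : a ≠ x := fun hEq => hanot (hEq ▸ hx)
    have := myAtom_orth hB ha (hs x hx) hne
    exact le_trans (Submodule.le_orthogonal_orthogonal x) (Submodule.orthogonal_le this)
  rw [← hsup, top_le_iff] at h1
  have : a ≤ ⊥ := by
    have h2 : a ≤ aᗮᗮ := Submodule.le_orthogonal_orthogonal a
    rw [h1] at h2
    simpa [Submodule.top_orthogonal_eq_bot] using h2
  exact ha.2.1 (le_bot_iff.mp this)

lemma myAtom_finrank_one {B : Set (Submodule ℂ H)} (hBb : IsBooleanSublattice B)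
    (hmax : ∀ B' : Set (Submodule ℂ H), IsBooleanSublattice B' → B ⊆ B' → B' = B)
    {a : Submodule ℂ H} (ha : MyAtom B a) : finrank ℂ a = 1 := by
  by_contra hfr1
  obtain ⟨hbot, htop, hinf, hsup, hcompl, hdist⟩ := hBb
  have hBb' : IsBooleanSublattice B := ⟨hbot, htop, hinf, hsup, hcompl, hdist⟩
  have hfr0 : finrank ℂ a ≠ 0 := fun h => ha.2.1 (Submodule.finrank_eq_zero.mp h)
  obtain ⟨x, hxa, hx0⟩ := (Submodule.ne_bot_iff a).mp ha.2.1
  set u : Submodule ℂ H := span ℂ {x} with hudef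
  have hua : u ≤ a := (span_singleton_le_iff_mem x a).mpr hxa
  have hu1 : finrank ℂ u = 1 := finrank_span_singleton hx0
  have hufr : finrank ℂ u < finrank ℂ a := by
    rcases lt_or_ge (finrank ℂ u) (finrank ℂ a) with h | h
    · exact h
    · exact absurd (Submodule.eq_of_le_of_finrank_le hua h ▸ hu1) hfr1
  have hune : u ≠ a := fun h => hfr1 (h ▸ hu1)
  have hubot : u ≠ ⊥ := by
    rw [hudef, Ne, span_singleton_eq_bot]; exact hx0
  set u' : Submodule ℂ H := uᗮ ⊓ a with hu'def
  have hu'a : u' ≤ a := inf_le_right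
  -- tables
  have huu' : u ⊓ u' = ⊥ := by
    have h1 : u ⊓ u' ≤ u ⊓ uᗮ := inf_le_inf_left u inf_le_left
    rw [Submodule.inf_orthogonal_eq_bot] at h1
    exact le_bot_iff.mp h1
  have iu'u : u' ⊓ u = ⊥ := by rw [inf_comm]; exact huu'
  have hsupuu' : u ⊔ u' = a := Submodule.sup_orthogonal_inf_of_hasOrthogonalProjection hua
  have su'u : u' ⊔ u = a := by rw [sup_comm]; exact hsupuu'
  have hrel : u'ᗮ ⊓ a = u := relcompl_relcompl hua
  have iua : u ⊓ a = u := inf_eq_left.mpr hua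
  have iau : a ⊓ u = u := inf_eq_right.mpr hua
  have iu'a : u' ⊓ a = u' := inf_eq_left.mpr hu'a
  have iau' : a ⊓ u' = u' := inf_eq_right.mpr hu'a
  have sua : u ⊔ a = a := sup_eq_right.mpr hua
  have sau : a ⊔ u = a := sup_eq_left.mpr hua
  have su'a : u' ⊔ a = a := sup_eq_right.mpr hu'a
  have sau' : a ⊔ u' = a := sup_eq_left.mpr hu'a
  have iaa : aᗮ ⊓ a = ⊥ := by rw [inf_comm]; exact Submodule.inf_orthogonal_eq_bot a
  set C : Set (Submodule ℂ H) := {⊥, u, u', a} with hCdef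
  have hCcases : ∀ c ∈ C, c = ⊥ ∨ c = u ∨ c = u' ∨ c = a := by
    intro c hc
    simpa [hCdef, Set.mem_insert_iff] using hc
  have hCle : ∀ c ∈ C, c ≤ a := by
    intro c hc
    rcases hCcases c hc with rfl | rfl | rfl | rfl
    · exact bot_le
    · exact hua
    · exact hu'a
    · exact le_rfl
  have hCinf : ∀ c ∈ C, ∀ c' ∈ C, c ⊓ c' ∈ C := by
    intro c hc c' hc'
    rcases hCcases c hc with rfl | rfl | rfl | rfl <;>
      rcases hCcases c' hc' with rfl | rfl | rfl | rfl <;>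
      simp [hCdef, huu', iu'u, iua, iau, iu'a, iau']
  have hCsup : ∀ c ∈ C, ∀ c' ∈ C, c ⊔ c' ∈ C := by
    intro c hc c' hc'
    rcases hCcases c hc with rfl | rfl | rfl | rfl <;>
      rcases hCcases c' hc' with rfl | rfl | rfl | rfl <;>
      simp [hCdef, hsupuu', su'u, sua, sau, su'a, sau']
  have hCcompl : ∀ c ∈ C, cᗮ ⊓ a ∈ C := by
    intro c hc
    rcases hCcases c hc with rfl | rfl | rfl | rfl
    · simp [hCdef, Submodule.bot_orthogonal_eq_top]
    · right; right; left; rfl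
    · simp [hCdef, hrel]
    · simp [hCdef, iaa]
  have hCdist : ∀ c₁ ∈ C, ∀ c₂ ∈ C, ∀ c₃ ∈ C, c₁ ⊓ (c₂ ⊔ c₃) = (c₁ ⊓ c₂) ⊔ (c₁ ⊓ c₃) := by
    intro c₁ h₁ c₂ h₂ c₃ h₃
    rcases hCcases c₁ h₁ with rfl | rfl | rfl | rfl <;>
      rcases hCcases c₂ h₂ with rfl | rfl | rfl | rfl <;>
      rcases hCcases c₃ h₃ with rfl | rfl | rfl | rfl <;>
      simp [huu', iu'u, iua, iau, iu'a, iau', hsupuu', su'u, sua, sau, su'a, sau']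
  -- the enlarged lattice
  set B' : Set (Submodule ℂ H) := {y | ∃ b ∈ B, ∃ c ∈ C, y = (b ⊓ aᗮ) ⊔ c} with hB'def
  have hsup_comp : ∀ b ∈ B, ∀ b' ∈ B, (b ⊓ aᗮ) ⊔ (b' ⊓ aᗮ) = (b ⊔ b') ⊓ aᗮ := by
    intro b hb b' hb'
    rw [inf_comm b, inf_comm b', inf_comm (b ⊔ b'), hdist aᗮ (hcompl a ha.1) b hb b' hb']
  have hinf_comp : ∀ (b b' c c' : Submodule ℂ H), c ∈ C → c' ∈ C →
      ((b ⊓ aᗮ) ⊔ c) ⊓ ((b' ⊓ aᗮ) ⊔ c') = ((b ⊓ b') ⊓ aᗮ) ⊔ (c ⊓ c') := by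
    intro b b' c c' hc hc'
    rw [inf_sup_orth a _ _ _ _ inf_le_right inf_le_right (hCle c hc) (hCle c' hc'),
      inf_inf_inf_comm, inf_idem]
  have hB'bool : IsBooleanSublattice B' := by
    refine ⟨⟨⊥, hbot, ⊥, by simp [hCdef], by simp⟩,
      ⟨⊤, htop, a, by simp [hCdef], ?_⟩, ?_, ?_, ?_, ?_⟩
    · rw [top_inf_eq, sup_comm]
      exact Submodule.sup_orthogonal_of_hasOrthogonalProjection.symm
    · rintro x ⟨b, hb, c, hc, rfl⟩ y ⟨b', hb', c', hc', rfl⟩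
      exact ⟨b ⊓ b', hinf b hb b' hb', c ⊓ c', hCinf c hc c' hc', hinf_comp b b' c c' hc hc'⟩
    · rintro x ⟨b, hb, c, hc, rfl⟩ y ⟨b', hb', c', hc', rfl⟩
      exact ⟨b ⊔ b', hsup b hb b' hb', c ⊔ c', hCsup c hc c' hc',
        by rw [sup_sup_sup_comm, hsup_comp b hb b' hb']⟩
    · rintro x ⟨b, hb, c, hc, rfl⟩
      exact ⟨(b ⊓ aᗮ)ᗮ, hcompl _ (hinf b hb aᗮ (hcompl a ha.1)), cᗮ ⊓ a, hCcompl c hc,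
        orth_sup a _ _ inf_le_right (hCle c hc)⟩
    · rintro x ⟨b₁, hb₁, c₁, hc₁, rfl⟩ y ⟨b₂, hb₂, c₂, hc₂, rfl⟩ z ⟨b₃, hb₃, c₃, hc₃, rfl⟩
      have e1 : ((b₂ ⊓ aᗮ) ⊔ c₂) ⊔ ((b₃ ⊓ aᗮ) ⊔ c₃) = ((b₂ ⊔ b₃) ⊓ aᗮ) ⊔ (c₂ ⊔ c₃) := by
        rw [sup_sup_sup_comm, hsup_comp b₂ hb₂ b₃ hb₃]
      rw [e1, hinf_comp b₁ (b₂ ⊔ b₃) c₁ (c₂ ⊔ c₃) hc₁ (hCsup c₂ hc₂ c₃ hc₃),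
        hinf_comp b₁ b₂ c₁ c₂ hc₁ hc₂, hinf_comp b₁ b₃ c₁ c₃ hc₁ hc₃,
        sup_sup_sup_comm, hdist b₁ hb₁ b₂ hb₂ b₃ hb₃,
        ← hsup_comp (b₁ ⊓ b₂) (hinf b₁ hb₁ b₂ hb₂) (b₁ ⊓ b₃) (hinf b₁ hb₁ b₃ hb₃),
        hCdist c₁ hc₁ c₂ hc₂ c₃ hc₃]
  have hsub : B ⊆ B' := by
    intro b hb
    rcases myAtom_le_or_le_orth hBb' ha hb with h | h
    · refine ⟨b, hb, a, by simp [hCdef], ?_⟩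
      conv_lhs => rw [← inf_top_eq b, ← Submodule.sup_orthogonal_of_hasOrthogonalProjection (K := a),
        hdist b hb a ha.1 aᗮ (hcompl a ha.1), inf_eq_right.mpr h]
      rw [sup_comm]
    · have h2 : b ≤ aᗮ := le_trans (Submodule.le_orthogonal_orthogonal b) (Submodule.orthogonal_le h)
      exact ⟨b, hb, ⊥, by simp [hCdef], by rw [inf_eq_left.mpr h2, sup_bot_eq]⟩
  have hBeq := hmax B' hB'bool hsub
  have huB' : u ∈ B' := ⟨⊥, hbot, u, by simp [hCdef], by simp⟩
  rw [hBeq] at huB'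
  rcases ha.2.2 u huB' hua with h | h
  · exact hubot h
  · exact hune h

end AuxiliaryLemmas

/-- Every maximal Boolean sublattice of the lattice of subspaces of a nontrivial
finite-dimensional complex inner product space is generated by an orthonormal basis. -/
theorem maximalBooleanSublattice_eq_orthonormalBasis {H : Type*}
    [NormedAddCommGroup H] [InnerProductSpace ℂ H] [FiniteDimensional ℂ H]
    (hn : 1 ≤ Module.finrank ℂ H)
    (B : Set (Submodule ℂ H)) (hB : IsMaximalBooleanSublattice B) :
    ∃ v : OrthonormalBasis (Fin (Module.finrank ℂ H)) ℂ H,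
      B = {K : Submodule ℂ H |
        ∃ S : Finset (Fin (Module.finrank ℂ H)), K = ⨆ i ∈ S, span ℂ {v i}} := by
  classical
  obtain ⟨hBb, hmax⟩ := hB
  obtain ⟨s, hs, hstop⟩ := eq_sup_myAtoms hBb hBb.2.1
  -- pick a unit vector in each atom
  have hchoice : ∀ x : s, ∃ wv : H, ‖wv‖ = 1 ∧ span ℂ {wv} = (x : Submodule ℂ H) := by
    rintro ⟨x, hx⟩
    have hx1 : finrank ℂ x = 1 := myAtom_finrank_one hBb hmax (hs x hx)
    obtain ⟨y, hyx, hy0⟩ := (Submodule.ne_bot_iff x).mp (hs x hx).2.1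
    refine ⟨(‖y‖ : ℂ)⁻¹ • y, ?_, ?_⟩
    · rw [norm_smul, norm_inv]
      simp [norm_ne_zero_iff.mpr hy0, inv_mul_cancel₀]
    · have hunit : IsUnit ((‖y‖ : ℂ)⁻¹) := by
        simp [isUnit_iff_ne_zero, hy0]
      have h1 : span ℂ {(‖y‖:ℂ)⁻¹ • y} = span ℂ {y} := Submodule.span_singleton_smul_eq hunit y
      have h2 : span ℂ {y} = x := by
        refine Submodule.eq_of_le_of_finrank_le ((span_singleton_le_iff_mem y x).mpr hyx) ?_
        rw [hx1, finrank_span_singleton hy0]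
      rw [h1, h2]
  choose wf hwf1 hwf2 using hchoice
  have hwmem : ∀ x : s, wf x ∈ (x : Submodule ℂ H) := fun x => by
    rw [← hwf2 x]; exact Submodule.mem_span_singleton_self _
  set k := s.card with hkdef
  set e : s ≃ Fin k := s.equivFin with hedef
  set f : Fin k → H := fun i => wf (e.symm i) with hfdef
  have hon : Orthonormal ℂ f := by
    refine ⟨fun i => hwf1 _, fun i j hij => ?_⟩
    have hne : ((e.symm i : s) : Submodule ℂ H) ≠ ((e.symm j : s) : Submodule ℂ H) := by
      intro hEq
      exact hij (by
        have : (e.symm i : s) = (e.symm j : s) := Subtype.ext hEq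
        simpa using congrArg e this)
    have horth : ((e.symm i : s) : Submodule ℂ H) ≤ ((e.symm j : s) : Submodule ℂ H)ᗮ :=
      myAtom_orth hBb (hs _ (e.symm i).2) (hs _ (e.symm j).2) hne
    exact Submodule.inner_left_of_mem_orthogonal (hwmem (e.symm j)) (horth (hwmem (e.symm i)))
  have hspan : ⊤ ≤ span ℂ (Set.range f) := by
    rw [hstop]
    refine Finset.sup_le fun x hx => ?_
    have h1 : (id x : Submodule ℂ H) = span ℂ {wf ⟨x, hx⟩} := (hwf2 ⟨x, hx⟩).symm
    rw [h1]
    refine Submodule.span_mono (Set.singleton_subset_iff.mpr ⟨e ⟨x, hx⟩, ?_⟩)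
    rw [hfdef]; simp
  set b0 : OrthonormalBasis (Fin k) ℂ H := OrthonormalBasis.mk hon hspan with hb0def
  have hk : k = Module.finrank ℂ H := by
    rw [Module.finrank_eq_card_basis b0.toBasis, Fintype.card_fin]
  set v : OrthonormalBasis (Fin (Module.finrank ℂ H)) ℂ H := b0.reindex (finCongr hk)
    with hvdef
  refine ⟨v, ?_⟩
  set m : Fin (Module.finrank ℂ H) → s := fun i => e.symm ((finCongr hk).symm i) with hmdef
  have hvm : ∀ i, span ℂ {v i} = ((m i : s) : Submodule ℂ H) := by
    intro i
    rw [hvdef, OrthonormalBasis.reindex_apply, hb0def, OrthonormalBasis.coe_mk, hfdef]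
    exact hwf2 (m i)
  have hmBmem : ∀ i, ((m i : s) : Submodule ℂ H) ∈ B := fun i => (hs _ (m i).2).1
  have hBsup : ∀ (S : Finset (Fin (Module.finrank ℂ H))) (g : Fin (Module.finrank ℂ H) → Submodule ℂ H),
      (∀ i ∈ S, g i ∈ B) → (⨆ i ∈ S, g i) ∈ B := by
    intro S
    induction S using Finset.induction with
    | empty => intro g _; simpa using hBb.1
    | insert a S hnotmem ih =>
      intro g hg
      rw [Finset.iSup_insert]
      exact hBb.2.2.2.1 _ (hg a (Finset.mem_insert_self a S)) _
        (ih g fun i hi => hg i (Finset.mem_insert_of_mem hi))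
  ext K
  constructor
  · intro hK
    obtain ⟨t, ht, htK⟩ := eq_sup_myAtoms hBb hK
    have htsub : ∀ x ∈ t, x ∈ s := fun x hx => myAtom_mem_decomp hBb hs hstop (ht x hx)
    refine ⟨Finset.univ.filter (fun i => ((m i : s) : Submodule ℂ H) ∈ t), ?_⟩
    have hrw : (⨆ i ∈ Finset.univ.filter (fun i => ((m i : s) : Submodule ℂ H) ∈ t),
        span ℂ {v i}) = ⨆ i ∈ Finset.univ.filter (fun i => ((m i : s) : Submodule ℂ H) ∈ t),
        ((m i : s) : Submodule ℂ H) := by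
      exact iSup_congr fun i => by rw [hvm i]
    rw [hrw, htK]
    refine le_antisymm ?_ ?_
    · refine Finset.sup_le fun x hx => ?_
      have hxs : x ∈ s := htsub x hx
      set i : Fin (Module.finrank ℂ H) := finCongr hk (e ⟨x, hxs⟩) with hidef
      have hmi : (m i : s) = ⟨x, hxs⟩ := by
        rw [hmdef, hidef]; simp
      have hiS : i ∈ Finset.univ.filter (fun i => ((m i : s) : Submodule ℂ H) ∈ t) := by
        rw [Finset.mem_filter]
        exact ⟨Finset.mem_univ i, by rw [hmi]; exact hx⟩
      have h2 : ((m i : s) : Submodule ℂ H) ≤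
          ⨆ j ∈ Finset.univ.filter (fun j => ((m j : s) : Submodule ℂ H) ∈ t),
            ((m j : s) : Submodule ℂ H) :=
        le_iSup₂ (f := fun j _ => ((m j : s) : Submodule ℂ H)) i hiS
      rw [hmi] at h2
      exact h2
    · refine iSup₂_le fun i hi => ?_
      rw [Finset.mem_filter] at hi
      exact Finset.le_sup (f := id) hi.2
  · rintro ⟨S, rfl⟩
    have hrw : (⨆ i ∈ S, span ℂ {v i}) = ⨆ i ∈ S, ((m i : s) : Submodule ℂ H) :=
      iSup_congr fun i => by rw [hvm i]
    rw [hrw]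
    exact hBsup S _ fun i _ => hmBmem i
end

section
/- Let H be a finite-dimensional complex inner product space with n = finrank ℂ H ≥ 1, and let D be the collection of finite sets A of one-dimensional subspaces of H that are pairwise orthogonal (V ≤ Wᗮ for all distinct V, W ∈ A) and satisfy sSup A = ⊤. Then the map sending A ∈ D to { sSup S | S ⊆ A } is a bijection from D onto the set of maximal Boolean sublattices of Submodule ℂ H. -/
open Submodule

section Aux

variable {H : Type*} [NormedAddCommGroup H] [InnerProductSpace ℂ H] [FiniteDimensional ℂ H]

/-- Any subspace of a one-dimensional subspace is `⊥` or everything. -/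
lemma line_atom {s y : Submodule ℂ H} (h1 : Module.finrank ℂ s = 1) (h : y ≤ s) :
    y = ⊥ ∨ y = s := by
  by_cases hy : y = ⊥
  · exact Or.inl hy
  · refine Or.inr (Submodule.eq_of_le_of_finrank_le h ?_)
    rw [h1]
    exact Nat.one_le_iff_ne_zero.mpr fun h0 => hy (Submodule.finrank_eq_zero.mp h0)

lemma orth_swap {U W : Submodule ℂ H} (h : U ≤ Wᗮ) : W ≤ Uᗮ := by
  rw [← Submodule.orthogonal_orthogonal W]
  exact Submodule.orthogonal_le h

lemma sdiff_le_orth {S T : Finset (Submodule ℂ H)}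
    (h : ∀ V ∈ S, ∀ W ∈ T, V ≤ Wᗮ) :
    sSup (↑S : Set (Submodule ℂ H)) ≤ (sSup (↑T : Set (Submodule ℂ H)))ᗮ := by
  refine sSup_le fun V hV => orth_swap (sSup_le fun W hW => ?_)
  exact orth_swap (h V hV W hW)

open Finset in
lemma key_inf [DecidableEq (Submodule ℂ H)] {A S T : Finset (Submodule ℂ H)}
    (hA : ∀ V ∈ A, ∀ W ∈ A, V ≠ W → V ≤ Wᗮ) (hS : S ⊆ A) (hT : T ⊆ A) :
    sSup (↑S : Set (Submodule ℂ H)) ⊓ sSup (↑T : Set (Submodule ℂ H))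
      = sSup (↑(S ∩ T) : Set (Submodule ℂ H)) := by
  classical
  have horth : sSup (↑(S \ T) : Set (Submodule ℂ H)) ≤ (sSup (↑T : Set (Submodule ℂ H)))ᗮ := by
    refine sdiff_le_orth fun V hV W hW => ?_
    rw [Finset.mem_sdiff] at hV
    exact hA V (hS hV.1) W (hT hW) (fun hVW => hV.2 (hVW ▸ hW))
  have hsplit : sSup (↑S : Set (Submodule ℂ H))
      = sSup (↑(S ∩ T) : Set (Submodule ℂ H)) ⊔ sSup (↑(S \ T) : Set (Submodule ℂ H)) := by
    have h : S ∩ T ∪ S \ T = S := by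
      ext v; simp only [Finset.mem_union, Finset.mem_inter, Finset.mem_sdiff]; tauto
    rw [← sSup_union, ← Finset.coe_union, h]
  have hdisj : sSup (↑(S \ T) : Set (Submodule ℂ H)) ⊓ sSup (↑T : Set (Submodule ℂ H)) = ⊥ :=
    disjoint_iff.mp (((Submodule.orthogonal_disjoint _).symm).mono_left horth)
  have hle : sSup (↑(S ∩ T) : Set (Submodule ℂ H)) ≤ sSup (↑T : Set (Submodule ℂ H)) :=
    sSup_le_sSup (by exact_mod_cast Finset.coe_subset.mpr Finset.inter_subset_right)
  rw [hsplit, sup_inf_assoc_of_le _ hle, hdisj, sup_bot_eq]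

open Finset in
lemma key_compl [DecidableEq (Submodule ℂ H)] {A S : Finset (Submodule ℂ H)}
    (hA : ∀ V ∈ A, ∀ W ∈ A, V ≠ W → V ≤ Wᗮ)
    (hAtop : sSup (↑A : Set (Submodule ℂ H)) = ⊤) (hS : S ⊆ A) :
    (sSup (↑S : Set (Submodule ℂ H)))ᗮ = sSup (↑(A \ S) : Set (Submodule ℂ H)) := by
  classical
  have hy : sSup (↑(A \ S) : Set (Submodule ℂ H)) ≤ (sSup (↑S : Set (Submodule ℂ H)))ᗮ := by
    refine sdiff_le_orth fun V hV W hW => ?_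
    rw [Finset.mem_sdiff] at hV
    exact hA V hV.1 W (hS hW) (fun hVW => hV.2 (hVW ▸ hW))
  have htop : sSup (↑(A \ S) : Set (Submodule ℂ H)) ⊔ sSup (↑S : Set (Submodule ℂ H)) = ⊤ := by
    rw [← sSup_union, ← Finset.coe_union, Finset.sdiff_union_of_subset hS, hAtop]
  calc (sSup (↑S : Set (Submodule ℂ H)))ᗮ
      = (sSup (↑(A \ S) : Set (Submodule ℂ H)) ⊔ sSup (↑S : Set (Submodule ℂ H)))
          ⊓ (sSup (↑S : Set (Submodule ℂ H)))ᗮ := by rw [htop, top_inf_eq]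
    _ = sSup (↑(A \ S) : Set (Submodule ℂ H))
          ⊔ (sSup (↑S : Set (Submodule ℂ H)) ⊓ (sSup (↑S : Set (Submodule ℂ H)))ᗮ) :=
        sup_inf_assoc_of_le _ hy
    _ = sSup (↑(A \ S) : Set (Submodule ℂ H)) := by
        rw [disjoint_iff.mp (Submodule.orthogonal_disjoint _), sup_bot_eq]

/-- The Boolean sublattice attached to a finite family of subspaces. -/
def latticeOf (A : Finset (Submodule ℂ H)) : Set (Submodule ℂ H) :=
  {K : Submodule ℂ H | ∃ S : Finset (Submodule ℂ H), S ⊆ A ∧ K = sSup (↑S : Set (Submodule ℂ H))}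

open Finset in
lemma latticeOf_boolean {A : Finset (Submodule ℂ H)}
    (hA2 : ∀ V ∈ A, ∀ W ∈ A, V ≠ W → V ≤ Wᗮ)
    (hA3 : sSup (↑A : Set (Submodule ℂ H)) = ⊤) :
    IsBooleanSublattice (latticeOf A) := by
  classical
  refine ⟨⟨∅, Finset.empty_subset _, by simp⟩, ⟨A, subset_rfl, hA3.symm⟩, ?_, ?_, ?_, ?_⟩
  · rintro x ⟨S, hS, rfl⟩ y ⟨T, hT, rfl⟩
    exact ⟨S ∩ T, Finset.inter_subset_left.trans hS, key_inf hA2 hS hT⟩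
  · rintro x ⟨S, hS, rfl⟩ y ⟨T, hT, rfl⟩
    exact ⟨S ∪ T, Finset.union_subset hS hT, by rw [Finset.coe_union, sSup_union]⟩
  · rintro x ⟨S, hS, rfl⟩
    exact ⟨A \ S, Finset.sdiff_subset, key_compl hA2 hA3 hS⟩
  · rintro x ⟨S, hS, rfl⟩ y ⟨T, hT, rfl⟩ z ⟨U, hU, rfl⟩
    rw [← sSup_union, ← Finset.coe_union, key_inf hA2 hS (Finset.union_subset hT hU),
      key_inf hA2 hS hT, key_inf hA2 hS hU, ← sSup_union, ← Finset.coe_union,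
      Finset.inter_union_distrib_left]

lemma sSup_finset_mem {B : Set (Submodule ℂ H)} (hB : IsBooleanSublattice B)
    (S : Finset (Submodule ℂ H)) (hS : ↑S ⊆ B) : sSup (↑S : Set (Submodule ℂ H)) ∈ B := by
  classical
  induction S using Finset.induction_on with
  | empty => simpa using hB.1
  | @insert s S₀ hs ih =>
    rw [Finset.coe_insert, sSup_insert]
    exact hB.2.2.2.1 s (hS (by simp)) _ (ih fun x hx => hS (by simp [Finset.mem_coe.mp hx]))

/-- Key distributivity consequence: meeting an element of a Boolean sublattice with
the supremum of a finite family of atoms of the sublattice gives the supremum of a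
subfamily. -/
lemma inf_sSup_decomp {B : Set (Submodule ℂ H)} (hB : IsBooleanSublattice B)
    {x : Submodule ℂ H} (hx : x ∈ B) (S : Finset (Submodule ℂ H)) (hS : ↑S ⊆ B)
    (hatom : ∀ s ∈ S, ∀ y ∈ B, y ≤ s → y = ⊥ ∨ y = s) :
    ∃ T : Finset (Submodule ℂ H), T ⊆ S ∧
      x ⊓ sSup (↑S : Set (Submodule ℂ H)) = sSup (↑T : Set (Submodule ℂ H)) := by
  classical
  induction S using Finset.induction_on with
  | empty => exact ⟨∅, subset_rfl, by simp⟩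
  | @insert s S₀ hs ih =>
    obtain ⟨T₀, hT₀, hx0⟩ := ih (fun v hv => hS (by simp [Finset.mem_coe.mp hv]))
      (fun v hv => hatom v (Finset.mem_insert_of_mem hv))
    have hsB : s ∈ B := hS (by simp)
    have hsS : sSup (↑S₀ : Set (Submodule ℂ H)) ∈ B :=
      sSup_finset_mem hB S₀ fun v hv => hS (by simp [Finset.mem_coe.mp hv])
    have hdist := hB.2.2.2.2.2 x hx s hsB _ hsS
    have hins : sSup (↑(insert s S₀) : Set (Submodule ℂ H))
        = s ⊔ sSup (↑S₀ : Set (Submodule ℂ H)) := by rw [Finset.coe_insert, sSup_insert]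
    rcases hatom s (Finset.mem_insert_self s S₀) (x ⊓ s) (hB.2.2.1 x hx s hsB) inf_le_right
      with h | h
    · exact ⟨T₀, hT₀.trans (Finset.subset_insert _ _),
        by rw [hins, hdist, h, hx0, bot_sup_eq]⟩
    · exact ⟨insert s T₀, Finset.insert_subset_insert s hT₀,
        by rw [hins, hdist, h, hx0, Finset.coe_insert, sSup_insert]⟩

lemma latticeOf_maximal {A : Finset (Submodule ℂ H)}
    (hA1 : ∀ V ∈ A, Module.finrank ℂ V = 1)
    (hA2 : ∀ V ∈ A, ∀ W ∈ A, V ≠ W → V ≤ Wᗮ)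
    (hA3 : sSup (↑A : Set (Submodule ℂ H)) = ⊤) :
    IsMaximalBooleanSublattice (latticeOf A) := by
  refine ⟨latticeOf_boolean hA2 hA3, fun B' hB' hsub => ?_⟩
  refine Set.Subset.antisymm (fun x hx => ?_) hsub
  have hAB : ↑A ⊆ B' := fun V hV =>
    hsub ⟨{V}, Finset.singleton_subset_iff.mpr hV, by simp⟩
  obtain ⟨T, hT, hxT⟩ := inf_sSup_decomp hB' hx A hAB
    (fun s hs y _ hy => line_atom (hA1 s hs) hy)
  rw [hA3, inf_top_eq] at hxT
  exact ⟨T, hT, hxT⟩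

open Classical in
/-- A chosen decomposition of a subspace into spans of orthonormal basis vectors. -/
noncomputable def lineDecomp (a : Submodule ℂ H) : Finset (Submodule ℂ H) :=
  Finset.image (fun i => (ℂ ∙ ((stdOrthonormalBasis ℂ a) i : H))) Finset.univ

lemma lineDecomp_finrank {a L : Submodule ℂ H} (hL : L ∈ lineDecomp a) :
    Module.finrank ℂ L = 1 := by
  classical
  simp only [lineDecomp] at hL
  obtain ⟨i, -, rfl⟩ := Finset.mem_image.mp hL
  refine finrank_span_singleton ?_
  simp only [ne_eq, ZeroMemClass.coe_eq_zero]
  intro h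
  have h1 := (stdOrthonormalBasis ℂ a).orthonormal.1 i
  rw [h] at h1
  simp at h1

lemma lineDecomp_le {a L : Submodule ℂ H} (hL : L ∈ lineDecomp a) : L ≤ a := by
  classical
  simp only [lineDecomp] at hL
  obtain ⟨i, -, rfl⟩ := Finset.mem_image.mp hL
  rw [Submodule.span_singleton_le_iff_mem]
  exact SetLike.coe_mem _

lemma lineDecomp_orth {a L L' : Submodule ℂ H} (hL : L ∈ lineDecomp a)
    (hL' : L' ∈ lineDecomp a) (hne : L ≠ L') : L ≤ L'ᗮ := by
  classical
  simp only [lineDecomp] at hL hL'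
  obtain ⟨i, -, rfl⟩ := Finset.mem_image.mp hL
  obtain ⟨j, -, rfl⟩ := Finset.mem_image.mp hL'
  have hij : i ≠ j := fun h => hne (by rw [h])
  rw [Submodule.span_singleton_le_iff_mem,
    Submodule.mem_orthogonal_singleton_iff_inner_right]
  have := (stdOrthonormalBasis ℂ a).orthonormal.2 (Ne.symm hij)
  simpa [Submodule.coe_inner] using this

lemma lineDecomp_sSup (a : Submodule ℂ H) :
    sSup (↑(lineDecomp a) : Set (Submodule ℂ H)) = a := by
  classical
  rw [lineDecomp]
  rw [Finset.coe_image, Finset.coe_univ, Set.image_univ, sSup_range]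
  rw [← Submodule.span_range_eq_iSup]
  have hr : Set.range (fun i => ((stdOrthonormalBasis ℂ a) i : H))
      = a.subtype '' Set.range (stdOrthonormalBasis ℂ a) := by
    rw [← Set.range_comp]; rfl
  rw [hr, ← Submodule.map_span, ← (stdOrthonormalBasis ℂ a).coe_toBasis,
    (stdOrthonormalBasis ℂ a).toBasis.span_eq, Submodule.map_subtype_top]

lemma biUnion_lineDecomp_sSup [DecidableEq (Submodule ℂ H)] (T : Finset (Submodule ℂ H)) :
    sSup (↑(T.biUnion lineDecomp) : Set (Submodule ℂ H)) = sSup (↑T : Set (Submodule ℂ H)) := by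
  classical
  induction T using Finset.induction_on with
  | empty => simp
  | @insert a T₀ ha ih =>
    rw [Finset.biUnion_insert, Finset.coe_union, sSup_union, ih, lineDecomp_sSup,
      Finset.coe_insert, sSup_insert]

/-- Every element of a Boolean sublattice is the supremum of a finite set of atoms of
the sublattice. -/
lemma exists_atoms_decomp {B : Set (Submodule ℂ H)} (hB : IsBooleanSublattice B) :
    ∀ b ∈ B, ∃ S : Finset (Submodule ℂ H),
      (∀ a ∈ S, a ∈ B ∧ a ≠ ⊥ ∧ ∀ x ∈ B, x ≤ a → x = ⊥ ∨ x = a) ∧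
      b = sSup (↑S : Set (Submodule ℂ H)) := by
  classical
  suffices h : ∀ k : ℕ, ∀ b ∈ B, Module.finrank ℂ b = k → ∃ S : Finset (Submodule ℂ H),
      (∀ a ∈ S, a ∈ B ∧ a ≠ ⊥ ∧ ∀ x ∈ B, x ≤ a → x = ⊥ ∨ x = a) ∧
      b = sSup (↑S : Set (Submodule ℂ H)) by
    exact fun b hb => h _ b hb rfl
  intro k
  induction k using Nat.strong_induction_on with
  | _ k ih =>
    intro b hb hk
    by_cases hbot : b = ⊥
    · exact ⟨∅, by simp, by simp [hbot]⟩
    · set P : Set ℕ := {m | ∃ a, (a ∈ B ∧ a ≤ b ∧ a ≠ ⊥) ∧ Module.finrank ℂ a = m} with hP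
      have hPne : P.Nonempty := ⟨_, b, ⟨hb, le_rfl, hbot⟩, rfl⟩
      obtain ⟨a, ⟨haB, hab, habot⟩, hafr⟩ := Nat.sInf_mem hPne
      have hatom : ∀ x ∈ B, x ≤ a → x = ⊥ ∨ x = a := by
        intro x hxB hxa
        by_cases hx : x = ⊥
        · exact Or.inl hx
        · refine Or.inr (Submodule.eq_of_le_of_finrank_le hxa ?_)
          rw [hafr]
          exact Nat.sInf_le ⟨x, ⟨hxB, hxa.trans hab, hx⟩, rfl⟩
      have haorth : aᗮ ∈ B := hB.2.2.2.2.1 a haB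
      have hsplit : b = a ⊔ (b ⊓ aᗮ) := by
        have htop : a ⊔ aᗮ = ⊤ :=
          codisjoint_iff.mp (Submodule.isCompl_orthogonal_of_hasOrthogonalProjection).codisjoint
        calc b = b ⊓ (a ⊔ aᗮ) := by rw [htop, inf_top_eq]
          _ = (b ⊓ a) ⊔ (b ⊓ aᗮ) := hB.2.2.2.2.2 b hb a haB aᗮ haorth
          _ = a ⊔ (b ⊓ aᗮ) := by rw [inf_eq_right.mpr hab]
      have hb'B : b ⊓ aᗮ ∈ B := hB.2.2.1 b hb aᗮ haorth
      have hb'lt : Module.finrank ℂ (b ⊓ aᗮ : Submodule ℂ H) < k := by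
        rcases lt_or_eq_of_le (Submodule.finrank_mono (inf_le_left : b ⊓ aᗮ ≤ b)) with h | h
        · omega
        · exfalso
          have hbb : b ⊓ aᗮ = b :=
            Submodule.eq_of_le_of_finrank_le inf_le_left (le_of_eq h.symm)
          have : a ≤ aᗮ := le_trans (le_trans hab (le_of_eq hbb.symm)) inf_le_right
          exact habot (le_bot_iff.mp (le_trans (le_inf le_rfl this)
            (Submodule.orthogonal_disjoint a).le_bot))
      obtain ⟨S', hS', hS'eq⟩ := ih _ hb'lt (b ⊓ aᗮ) hb'B rfl
      refine ⟨insert a S', ?_, ?_⟩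
      · intro c hc
        rcases Finset.mem_insert.mp hc with rfl | hc
        · exact ⟨haB, habot, hatom⟩
        · exact hS' c hc
      · rw [Finset.coe_insert, sSup_insert, ← hS'eq, ← hsplit]

end Aux

/-- Basis/sublattice correspondence: the map sending a finite family of pairwise
orthogonal one-dimensional subspaces with supremum `⊤` to the collection of suprema
of its subsets is a bijection onto the set of maximal Boolean sublattices of
`Submodule ℂ H`. -/
theorem basis_sublattice_correspondence {H : Type*}
    [NormedAddCommGroup H] [InnerProductSpace ℂ H] [FiniteDimensional ℂ H]
    (hn : 1 ≤ Module.finrank ℂ H) :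
    Set.BijOn
      (fun A : Finset (Submodule ℂ H) =>
        {K : Submodule ℂ H | ∃ S : Finset (Submodule ℂ H), S ⊆ A ∧ K = sSup (↑S : Set (Submodule ℂ H))})
      {A : Finset (Submodule ℂ H) |
        (∀ V ∈ A, Module.finrank ℂ V = 1) ∧
        (∀ V ∈ A, ∀ W ∈ A, V ≠ W → V ≤ Wᗮ) ∧
        sSup (↑A : Set (Submodule ℂ H)) = ⊤}
      {B : Set (Submodule ℂ H) | IsMaximalBooleanSublattice B} := by
  classical
  have hmem : ∀ (A₁ A₂ : Finset (Submodule ℂ H)),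
      (∀ V ∈ A₁, Module.finrank ℂ V = 1) → (∀ V ∈ A₂, Module.finrank ℂ V = 1) →
      latticeOf A₁ ⊆ latticeOf A₂ → A₁ ⊆ A₂ := by
    intro A₁ A₂ h1 h2 hsub V hV
    have : V ∈ latticeOf A₂ :=
      hsub ⟨{V}, Finset.singleton_subset_iff.mpr hV, by simp⟩
    obtain ⟨S, hS, hVS⟩ := this
    rcases S.eq_empty_or_nonempty with rfl | ⟨W, hW⟩
    · exfalso
      have hVbot : V = ⊥ := by rw [hVS, Finset.coe_empty, sSup_empty]
      have h1V : Module.finrank ℂ V = 1 := h1 V hV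
      rw [hVbot, finrank_bot] at h1V
      exact absurd h1V (by norm_num)
    · have hWV : W ≤ V := hVS ▸ le_sSup (Finset.mem_coe.mpr hW)
      have hWVeq : W = V := Submodule.eq_of_le_of_finrank_le hWV
        (by rw [h1 V hV, h2 W (hS hW)])
      exact hWVeq ▸ hS hW
  refine ⟨fun A hA => ?_, fun A₁ h₁ A₂ h₂ heq => ?_, fun B hB => ?_⟩
  · exact latticeOf_maximal hA.1 hA.2.1 hA.2.2
  · exact Finset.Subset.antisymm
      (hmem A₁ A₂ h₁.1 h₂.1 (le_of_eq heq))
      (hmem A₂ A₁ h₂.1 h₁.1 (le_of_eq heq.symm))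
  · -- surjectivity
    obtain ⟨hBbool, hBmax⟩ := hB
    obtain ⟨A₀, hA₀atoms, hA₀top⟩ := exists_atoms_decomp hBbool ⊤ hBbool.2.1
    -- pairwise orthogonality of the atoms in A₀
    have horthA₀ : ∀ a ∈ A₀, ∀ a' ∈ A₀, a ≠ a' → a ≤ a'ᗮ := by
      intro a ha a' ha' hne
      obtain ⟨haB, habot, haatom⟩ := hA₀atoms a ha
      obtain ⟨ha'B, ha'bot, ha'atom⟩ := hA₀atoms a' ha'
      have hinf : a ⊓ a' = ⊥ := by
        rcases haatom (a ⊓ a') (hBbool.2.2.1 a haB a' ha'B) inf_le_left with h | h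
        · exact h
        · exfalso
          have : a ≤ a' := h ▸ inf_le_right
          rcases ha'atom a haB this with h' | h'
          · exact habot h'
          · exact hne h'
      have ha'orth : a'ᗮ ∈ B := hBbool.2.2.2.2.1 a' ha'B
      have htop : a' ⊔ a'ᗮ = ⊤ :=
        codisjoint_iff.mp (Submodule.isCompl_orthogonal_of_hasOrthogonalProjection).codisjoint
      calc a = a ⊓ (a' ⊔ a'ᗮ) := by rw [htop, inf_top_eq]
        _ = (a ⊓ a') ⊔ (a ⊓ a'ᗮ) := hBbool.2.2.2.2.2 a haB a' ha'B a'ᗮ ha'orth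
        _ = a ⊓ a'ᗮ := by rw [hinf, bot_sup_eq]
        _ ≤ a'ᗮ := inf_le_right
    -- refine the atoms into lines
    set A : Finset (Submodule ℂ H) := A₀.biUnion lineDecomp with hA
    have hAdom : (∀ V ∈ A, Module.finrank ℂ V = 1) ∧
        (∀ V ∈ A, ∀ W ∈ A, V ≠ W → V ≤ Wᗮ) ∧
        sSup (↑A : Set (Submodule ℂ H)) = ⊤ := by
      refine ⟨?_, ?_, ?_⟩
      · intro V hV
        obtain ⟨a, _, hV⟩ := Finset.mem_biUnion.mp hV
        exact lineDecomp_finrank hV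
      · intro V hV W hW hne
        obtain ⟨a, ha, hV⟩ := Finset.mem_biUnion.mp hV
        obtain ⟨a', ha', hW⟩ := Finset.mem_biUnion.mp hW
        by_cases haa : a = a'
        · exact lineDecomp_orth hV (haa ▸ hW) hne
        · exact le_trans (lineDecomp_le hV)
            (le_trans (horthA₀ a ha a' ha' haa) (Submodule.orthogonal_le (lineDecomp_le hW)))
      · rw [hA, biUnion_lineDecomp_sSup, ← hA₀top]
    -- B is contained in latticeOf A
    have hBsub : B ⊆ latticeOf A := by
      intro b hb
      obtain ⟨T, hT, hbT⟩ := inf_sSup_decomp hBbool hb A₀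
        (fun a ha => (hA₀atoms a ha).1) (fun a ha => (hA₀atoms a ha).2.2)
      rw [← hA₀top, inf_top_eq] at hbT
      refine ⟨T.biUnion lineDecomp, ?_, ?_⟩
      · exact Finset.biUnion_subset_biUnion_of_subset_left _ hT
      · rw [biUnion_lineDecomp_sSup, hbT]
    have hlat : latticeOf A = B :=
      hBmax (latticeOf A) (latticeOf_boolean hAdom.2.1 hAdom.2.2) hBsub
    exact ⟨A, hAdom, hlat⟩
end

section
/- Let H be a finite-dimensional complex inner product space with n = finrank ℂ H ≥ 1 and let B be a maximal Boolean sublattice of Submodule ℂ H. Then the atoms of B (minimal elements of B \ {⊥}) are exactly n pairwise orthogonal one-dimensional subspaces of H whose supremum is ⊤, and every element of B is the supremum of the atoms of B below it. -/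
open Submodule

/-- The atoms of a subset `B` of `Submodule ℂ H`: the elements `V ∈ B`, `V ≠ ⊥`,
such that no `W ∈ B` satisfies `⊥ < W < V`. -/
def atomsOf {H : Type*} [NormedAddCommGroup H] [InnerProductSpace ℂ H]
    (B : Set (Submodule ℂ H)) : Set (Submodule ℂ H) :=
  {V | V ∈ B ∧ V ≠ ⊥ ∧ ∀ W ∈ B, ¬(⊥ < W ∧ W < V)}

/-!
Distributivity together with `x ⊔ xᗮ = ⊤` splits every `y ∈ B` as `(y ⊓ x) ⊔ (y ⊓ xᗮ)`, so
distinct atoms of `B` are orthogonal; in finite dimension they are therefore finitely many, and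
every element of `B` is the span of the atoms below it. Conversely, for any orthogonal
decomposition `e` of `H` the spans of subfamilies of `e` form a Boolean sublattice, because
`(sSup S)ᗮ = sSup (e \ S)`. Hence a maximal `B` consists exactly of the spans of subfamilies of
its atoms, and an atom `V` of dimension at least two could be split as `W ⊔ (Wᗮ ⊓ V)` with
`⊥ < W < V`, yielding a strictly larger Boolean sublattice containing `W`.
-/

open Module

theorem sSup_image_powerset_subset {α : Type*} [CompleteLattice α] {s t : Set α}
    (h : s ⊆ sSup '' 𝒫 t) : sSup '' 𝒫 s ⊆ sSup '' 𝒫 t := by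
  rintro _ ⟨S, hS, rfl⟩
  have h' : ∀ x ∈ s, ∃ T ⊆ t, sSup T = x := h
  choose! T hTt hT using h'
  refine ⟨⋃ x ∈ S, T x, Set.iUnion₂_subset fun x hx => hTt x (hS hx), ?_⟩
  simp_rw [sSup_iUnion]
  rw [sSup_eq_iSup]
  exact biSup_congr fun x hx => hT x (hS hx)

namespace Submodule

variable {𝕜 E : Type*} [RCLike 𝕜] [NormedAddCommGroup E] [InnerProductSpace 𝕜 E]

theorem eq_orthogonal_of_isOrtho_of_sup_eq_top {X Y : Submodule 𝕜 E} (h : X ⟂ Y)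
    (hsup : X ⊔ Y = ⊤) : X = Yᗮ := by
  rw [← top_inf_eq Yᗮ, ← hsup, sup_inf_assoc_of_le Y h, inf_orthogonal_eq_bot, sup_bot_eq]

section OrthogonalDecomposition

variable {e S T : Set (Submodule 𝕜 E)} (he : e.Pairwise (· ⟂ ·)) (htop : sSup e = ⊤)
include he htop

theorem orthogonal_sSup_of_subset (hS : S ⊆ e) : (sSup S)ᗮ = sSup (e \ S) := by
  refine (eq_orthogonal_of_isOrtho_of_sup_eq_top ?_ ?_).symm
  · exact isOrtho_sSup_left.2 fun V hV => isOrtho_sSup_right.2 fun W hW =>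
      he hV.1 (hS hW) fun h => hV.2 (h ▸ hW)
  · rw [← sSup_union, Set.sdiff_union_of_subset hS, htop]

theorem sSup_eq_orthogonal_sSup_diff (hS : S ⊆ e) : sSup S = (sSup (e \ S))ᗮ := by
  rw [orthogonal_sSup_of_subset he htop Set.sdiff_subset, Set.sdiff_sdiff_cancel_left hS]

theorem sSup_inter_of_subset (hS : S ⊆ e) (hT : T ⊆ e) :
    sSup (S ∩ T) = sSup S ⊓ sSup T := by
  rw [sSup_eq_orthogonal_sSup_diff he htop (Set.inter_subset_left.trans hS), Set.sdiff_inter,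
    sSup_union, ← inf_orthogonal, ← sSup_eq_orthogonal_sSup_diff he htop hS,
    ← sSup_eq_orthogonal_sSup_diff he htop hT]

end OrthogonalDecomposition

theorem finite_of_pairwise_isOrtho [FiniteDimensional 𝕜 E] {e : Set (Submodule 𝕜 E)}
    (he : e.Pairwise (· ⟂ ·)) : e.Finite :=
  WellFoundedGT.finite_of_sSupIndep <| (sSupIndep_iff e).2 <|
    (OrthogonalFamily.of_pairwise fun V W hVW => he V.2 W.2 (Subtype.coe_ne_coe.2 hVW)).independent

theorem finrank_sSup_of_pairwise_isOrtho [FiniteDimensional 𝕜 E] (A : Finset (Submodule 𝕜 E))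
    (hA : (A : Set (Submodule 𝕜 E)).Pairwise (· ⟂ ·)) :
    finrank 𝕜 ↥(sSup (A : Set (Submodule 𝕜 E))) = ∑ V ∈ A, finrank 𝕜 V := by
  classical
  induction A using Finset.induction_on with
  | empty => simp
  | @insert V A hV ih =>
    rw [Finset.coe_insert, Set.pairwise_insert_of_symm] at hA
    have hdisj : V ⊓ sSup (A : Set (Submodule 𝕜 E)) = ⊥ := disjoint_iff.1 <|
      IsOrtho.disjoint <| isOrtho_sSup_right.2 fun W hW => hA.2 W hW fun h => hV (h ▸ hW)
    have := finrank_sup_add_finrank_inf_eq V (sSup (A : Set (Submodule 𝕜 E)))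
    rw [hdisj, finrank_bot, add_zero, ih hA.1] at this
    rw [Finset.coe_insert, sSup_insert, this, Finset.sum_insert hV]

def splitAt (e : Set (Submodule 𝕜 E)) (V W : Submodule 𝕜 E) : Set (Submodule 𝕜 E) :=
  insert W (insert (Wᗮ ⊓ V) (e \ {V}))

theorem pairwise_isOrtho_splitAt {e : Set (Submodule 𝕜 E)} {V W : Submodule 𝕜 E}
    (he : e.Pairwise (· ⟂ ·)) (hV : V ∈ e) (hWV : W ≤ V) :
    (splitAt e V W).Pairwise (· ⟂ ·) := by
  have hVe : ∀ X ∈ e \ {V}, V ⟂ X := fun X hX => he hV hX.1 (Ne.symm hX.2)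
  refine Set.pairwise_insert_of_symm.2 ⟨Set.pairwise_insert_of_symm.2
    ⟨he.mono Set.sdiff_subset, fun X hX _ => (hVe X hX).mono_left inf_le_right⟩, ?_⟩
  rintro X (rfl | hX) -
  · exact (isOrtho_orthogonal_right W).mono_right inf_le_left
  · exact (hVe X hX).mono_left hWV

theorem subset_sSup_image_powerset_splitAt (e : Set (Submodule 𝕜 E)) {V W : Submodule 𝕜 E}
    [W.HasOrthogonalProjection] (hWV : W ≤ V) : e ⊆ sSup '' 𝒫 splitAt e V W := by
  intro X hX
  by_cases hXV : X = V
  · refine ⟨{W, Wᗮ ⊓ V}, ?_, ?_⟩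
    · exact Set.insert_subset_insert (Set.singleton_subset_iff.2 (Set.mem_insert _ _))
    · rw [sSup_pair, sup_orthogonal_inf_of_hasOrthogonalProjection hWV, hXV]
  · exact ⟨{X}, Set.singleton_subset_iff.2 (.inr (.inr ⟨hX, hXV⟩)), sSup_singleton⟩

end Submodule

section BooleanSublattice

variable {H : Type*} [NormedAddCommGroup H] [InnerProductSpace ℂ H] {B : Set (Submodule ℂ H)}

theorem isBooleanSublattice_sSup_image_powerset {e : Set (Submodule ℂ H)}
    (he : e.Pairwise (· ⟂ ·)) (htop : sSup e = ⊤) : IsBooleanSublattice (sSup '' 𝒫 e) := by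
  refine ⟨⟨∅, Set.empty_subset e, sSup_empty⟩, ⟨e, Set.mem_powerset subset_rfl, htop⟩,
    ?_, ?_, ?_, ?_⟩
  · rintro _ ⟨S, hS, rfl⟩ _ ⟨T, hT, rfl⟩
    exact ⟨S ∩ T, Set.inter_subset_left.trans hS, sSup_inter_of_subset he htop hS hT⟩
  · rintro _ ⟨S, hS, rfl⟩ _ ⟨T, hT, rfl⟩
    exact ⟨S ∪ T, Set.union_subset hS hT, sSup_union⟩
  · rintro _ ⟨S, hS, rfl⟩
    exact ⟨e \ S, Set.sdiff_subset, (orthogonal_sSup_of_subset he htop hS).symm⟩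
  · rintro _ ⟨S, hS, rfl⟩ _ ⟨T, hT, rfl⟩ _ ⟨U, hU, rfl⟩
    have hTU : T ∪ U ⊆ e := Set.union_subset hT hU
    rw [← sSup_union, ← sSup_inter_of_subset he htop hS hTU,
      ← sSup_inter_of_subset he htop hS hT, ← sSup_inter_of_subset he htop hS hU,
      ← sSup_union, Set.inter_union_distrib_left]

theorem eq_bot_or_eq_of_mem_atomsOf {V K : Submodule ℂ H} (hV : V ∈ atomsOf B) (hK : K ∈ B)
    (hKV : K ≤ V) : K = ⊥ ∨ K = V := by
  by_contra! h
  exact hV.2.2 K hK ⟨bot_lt_iff_ne_bot.2 h.1, hKV.lt_of_ne h.2⟩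

theorem exists_mem_atomsOf_le [FiniteDimensional ℂ H] {K : Submodule ℂ H} (hK : K ∈ B)
    (hK₀ : K ≠ ⊥) : ∃ V ∈ atomsOf B, V ≤ K := by
  obtain ⟨V, ⟨hVB, hV₀, hVK⟩, hmin⟩ :=
    wellFounded_lt.has_min {W | W ∈ B ∧ W ≠ ⊥ ∧ W ≤ K} ⟨K, hK, hK₀, le_rfl⟩
  refine ⟨V, ⟨hVB, hV₀, fun W hWB ⟨hW₀, hWV⟩ => ?_⟩, hVK⟩
  exact hmin W ⟨hWB, hW₀.ne', hWV.le.trans hVK⟩ hWV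

namespace IsBooleanSublattice

variable [FiniteDimensional ℂ H] (hB : IsBooleanSublattice B)
include hB

theorem le_orthogonal_of_inf_eq_bot {x y : Submodule ℂ H} (hx : x ∈ B) (hy : y ∈ B)
    (h : y ⊓ x = ⊥) : y ≤ xᗮ := by
  obtain ⟨-, -, -, -, horth, hdistrib⟩ := hB
  have hy_eq : y = y ⊓ x ⊔ y ⊓ xᗮ := by
    rw [← hdistrib y hy x hx xᗮ (horth x hx), sup_orthogonal_of_hasOrthogonalProjection,
      inf_top_eq]
  rw [hy_eq, h, bot_sup_eq]
  exact inf_le_right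

theorem pairwise_isOrtho_atomsOf : (atomsOf B).Pairwise (· ⟂ ·) := by
  intro V hV W hW hVW
  refine hB.le_orthogonal_of_inf_eq_bot hW.1 hV.1 ?_
  refine (eq_bot_or_eq_of_mem_atomsOf hV (hB.2.2.1 V hV.1 W hW.1) inf_le_left).resolve_right ?_
  intro hinf
  rcases eq_bot_or_eq_of_mem_atomsOf hW hV.1 (hinf ▸ inf_le_right) with h | h
  exacts [hV.2.1 h, hVW h]

theorem finite_atomsOf : (atomsOf B).Finite :=
  finite_of_pairwise_isOrtho hB.pairwise_isOrtho_atomsOf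

theorem eq_sSup_atomsOf_le {K : Submodule ℂ H} (hK : K ∈ B) :
    K = sSup {V | V ∈ atomsOf B ∧ V ≤ K} := by
  set S := sSup {V | V ∈ atomsOf B ∧ V ≤ K}
  have hSB : S ∈ B := SupClosed.sSup_mem (fun x hx y hy => hB.2.2.2.1 x hx y hy)
    (hB.finite_atomsOf.subset fun V hV => hV.1) hB.1 fun V hV => hV.1.1
  have hSK : S ≤ K := sSup_le fun V hV => hV.2
  have hR : Sᗮ ⊓ K = ⊥ := by
    by_contra hR
    obtain ⟨V, hV, hVR⟩ :=
      exists_mem_atomsOf_le (hB.2.2.1 _ (hB.2.2.2.2.1 S hSB) K hK) hR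
    have hVS : V ≤ S := le_sSup ⟨hV, hVR.trans inf_le_right⟩
    exact hV.2.1 (le_bot_iff.1 (inf_orthogonal_eq_bot S ▸ le_inf hVS (hVR.trans inf_le_left)))
  rw [← sup_orthogonal_inf_of_hasOrthogonalProjection hSK, hR, sup_bot_eq]

theorem sSup_atomsOf : sSup (atomsOf B) = ⊤ := by
  simpa using (hB.eq_sSup_atomsOf_le hB.2.1).symm

end IsBooleanSublattice

namespace IsMaximalBooleanSublattice

variable [FiniteDimensional ℂ H] (hB : IsMaximalBooleanSublattice B)
include hB

theorem sSup_image_powerset_atomsOf : sSup '' 𝒫 atomsOf B = B :=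
  hB.2 _ (isBooleanSublattice_sSup_image_powerset hB.1.pairwise_isOrtho_atomsOf hB.1.sSup_atomsOf)
    fun _ hK => ⟨_, fun _ hV => hV.1, (hB.1.eq_sSup_atomsOf_le hK).symm⟩

theorem finrank_eq_one_of_mem_atomsOf {V : Submodule ℂ H} (hV : V ∈ atomsOf B) :
    finrank ℂ V = 1 := by
  rw [← isAtom_iff_finrank_eq_one]
  refine ⟨hV.2.1, fun W hWV => ?_⟩
  by_contra hW
  set e := splitAt (atomsOf B) V W
  have hsplit : atomsOf B ⊆ sSup '' 𝒫 e := subset_sSup_image_powerset_splitAt _ hWV.le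
  have htop : sSup e = ⊤ := by
    refine top_unique (hB.1.sSup_atomsOf ▸ sSup_le fun X hX => ?_)
    obtain ⟨T, hT, rfl⟩ := hsplit hX
    exact sSup_le_sSup hT
  have hBe : B ⊆ sSup '' 𝒫 e :=
    hB.sSup_image_powerset_atomsOf ▸ sSup_image_powerset_subset hsplit
  have hWB : W ∈ B := by
    rw [← hB.2 _ (isBooleanSublattice_sSup_image_powerset
      (pairwise_isOrtho_splitAt hB.1.pairwise_isOrtho_atomsOf hV hWV.le) htop) hBe]
    exact ⟨{W}, Set.singleton_subset_iff.2 (Set.mem_insert W _), sSup_singleton⟩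
  exact hV.2.2 W hWB ⟨bot_lt_iff_ne_bot.2 hW, hWV⟩

end IsMaximalBooleanSublattice

end BooleanSublattice

theorem atoms_of_maximalBooleanSublattice_general {H : Type*}
    [NormedAddCommGroup H] [InnerProductSpace ℂ H] [FiniteDimensional ℂ H]
    (B : Set (Submodule ℂ H)) (hB : IsMaximalBooleanSublattice B) :
    (∃ A : Finset (Submodule ℂ H),
      (↑A : Set (Submodule ℂ H)) = atomsOf B ∧
      A.card = Module.finrank ℂ H ∧
      (∀ V ∈ A, Module.finrank ℂ V = 1) ∧
      (∀ V ∈ A, ∀ W ∈ A, V ≠ W → V ≤ Wᗮ) ∧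
      sSup (↑A : Set (Submodule ℂ H)) = ⊤) ∧
    ∀ K ∈ B, K = sSup {V | V ∈ atomsOf B ∧ V ≤ K} := by
  have hfin := hB.1.finite_atomsOf
  have hA : (hfin.toFinset : Set (Submodule ℂ H)) = atomsOf B := hfin.coe_toFinset
  have hrank : ∀ V ∈ hfin.toFinset, finrank ℂ V = 1 := fun V hV =>
    hB.finrank_eq_one_of_mem_atomsOf (hfin.mem_toFinset.1 hV)
  have horth : (hfin.toFinset : Set (Submodule ℂ H)).Pairwise (· ⟂ ·) :=
    hA.symm ▸ hB.1.pairwise_isOrtho_atomsOf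
  have htop : sSup (hfin.toFinset : Set (Submodule ℂ H)) = ⊤ := hA.symm ▸ hB.1.sSup_atomsOf
  refine ⟨⟨hfin.toFinset, hA, ?_, hrank, fun V hV W hW => horth hV hW, htop⟩,
    fun K hK => hB.1.eq_sSup_atomsOf_le hK⟩
  calc hfin.toFinset.card = ∑ V ∈ hfin.toFinset, finrank ℂ V := by
        rw [Finset.sum_congr rfl hrank, Finset.card_eq_sum_ones]
    _ = finrank ℂ H := by
        rw [← finrank_sSup_of_pairwise_isOrtho _ horth, htop, finrank_top]

/-- The atoms of a maximal Boolean sublattice `B` of `Submodule ℂ H` are exactly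
`n = finrank ℂ H` pairwise orthogonal one-dimensional subspaces with supremum `⊤`,
and every element of `B` is the supremum of the atoms of `B` below it. -/
theorem atoms_of_maximalBooleanSublattice {H : Type*}
    [NormedAddCommGroup H] [InnerProductSpace ℂ H] [FiniteDimensional ℂ H]
    (hn : 1 ≤ Module.finrank ℂ H)
    (B : Set (Submodule ℂ H)) (hB : IsMaximalBooleanSublattice B) :
    (∃ A : Finset (Submodule ℂ H),
      (↑A : Set (Submodule ℂ H)) = atomsOf B ∧
      A.card = Module.finrank ℂ H ∧
      (∀ V ∈ A, Module.finrank ℂ V = 1) ∧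
      (∀ V ∈ A, ∀ W ∈ A, V ≠ W → V ≤ Wᗮ) ∧
      sSup (↑A : Set (Submodule ℂ H)) = ⊤) ∧
    ∀ K ∈ B, K = sSup {V | V ∈ atomsOf B ∧ V ≤ K} :=
  atoms_of_maximalBooleanSublattice_general B hB
end

section
/- Let H be a finite-dimensional complex inner product space and let C ⊆ Submodule ℂ H be a maximal chain (a totally ordered subset maximal under inclusion; it necessarily contains ⊥ and ⊤). Define the centralizer Cent(C) = { x ∈ Submodule ℂ H | ∀ a ∈ C, (x ⊓ a) ⊔ (xᗮ ⊓ a) = a }, let L_C be the closure of C ∪ Cent(C) under finite meets and finite joins, and let B_C be the closure of L_C ∪ { yᗮ | y ∈ L_C } under finite meets and finite joins. Then B_C is a maximal Boolean sublattice of Submodule ℂ H. -/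
open Submodule

/-- The closure of a set in a lattice under finite meets and finite joins. -/
inductive LatticeClosure {α : Type*} [Lattice α] (s : Set α) : α → Prop
  | base : ∀ x ∈ s, LatticeClosure s x
  | inf : ∀ x y, LatticeClosure s x → LatticeClosure s y → LatticeClosure s (x ⊓ y)
  | sup : ∀ x y, LatticeClosure s x → LatticeClosure s y → LatticeClosure s (x ⊔ y)

/-- The centralizer of a set `C` of subspaces: all subspaces `x` that commute with
every `a ∈ C`, i.e. `(x ⊓ a) ⊔ (xᗮ ⊓ a) = a`. -/
def Centralizer {H : Type*} [NormedAddCommGroup H] [InnerProductSpace ℂ H]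
    (C : Set (Submodule ℂ H)) : Set (Submodule ℂ H) :=
  {x | ∀ a ∈ C, (x ⊓ a) ⊔ (xᗮ ⊓ a) = a}

/-!
A maximal chain in an `n`-dimensional space is a complete flag `V₀ < V₁ < ⋯ < Vₙ`, so the lines
`eᵢ = Vᵢᗮ ⊓ Vᵢ₊₁` are pairwise orthogonal and span `H`, and the joins of subfamilies of the `eᵢ`
form a Boolean sublattice `D`, a copy of the power set of `Fin n`. A subspace commuting with both
`Vᵢ` and `Vᵢ₊₁` must contain `eᵢ` or be orthogonal to it (count dimensions), so the centralizer of
the chain lies in `D`; so does the chain itself, and each `eᵢ` is generated by it, whence `B_C = D`.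
Finally, distributivity against `x ⊔ xᗮ = ⊤` makes any two elements of a Boolean sublattice commute,
so a Boolean sublattice containing `D` lies in the centralizer of the chain, hence in `D`.
-/

open Module

theorem IsMaxChain.mem_of_forall_rel_or_rel {α : Type*} {r : α → α → Prop} {C : Set α} {x : α}
    (hC : IsMaxChain r C) (h : ∀ c ∈ C, r x c ∨ r c x) : x ∈ C := by
  rw [hC.2 (hC.1.insert fun c hc _ => h c hc) (Set.subset_insert x C)]
  exact Set.mem_insert x C

section Chain

variable {K V : Type*} [DivisionRing K] [AddCommGroup V] [Module K V] [FiniteDimensional K V]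
  {C : Set (Submodule K V)}

theorem IsChain.le_of_finrank_le (hC : IsChain (· ≤ ·) C) {a b : Submodule K V} (ha : a ∈ C)
    (hb : b ∈ C) (h : finrank K a ≤ finrank K b) : a ≤ b :=
  (hC.total ha hb).elim id fun hba => (Submodule.eq_of_le_of_finrank_le hba h).ge

theorem Submodule.exists_lt_lt_of_finrank_add_one_lt {a b : Submodule K V} (hab : a ≤ b)
    (h : finrank K a + 1 < finrank K b) : ∃ x, a < x ∧ x < b := by
  obtain ⟨v, hvb, hva⟩ := SetLike.exists_of_lt (hab.lt_of_ne (by rintro rfl; omega))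
  refine ⟨K ∙ v ⊔ a, (covBy_span_singleton_sup hva).lt,
    (sup_le ((span_singleton_le_iff_mem v b).2 hvb) hab).lt_of_ne fun heq => ?_⟩
  have := finrank_add_le_finrank_add_finrank (K ∙ v) a
  rw [heq, finrank_span_singleton (ne_of_mem_of_not_mem a.zero_mem hva).symm] at this
  omega

theorem IsMaxChain.exists_finrank_eq (hC : IsMaxChain (· ≤ ·) C) :
    ∀ k ≤ finrank K V, ∃ a ∈ C, finrank K a = k
  | 0, _ => ⟨⊥, hC.bot_mem, finrank_bot K V⟩
  | k + 1, hk => by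
    obtain ⟨a, haC, rfl⟩ := hC.exists_finrank_eq k (by omega)
    obtain ⟨b, ⟨hbC, hab⟩, hmin⟩ := (measure fun c : Submodule K V => finrank K c).wf.has_min
      {c ∈ C | finrank K a < finrank K c} ⟨⊤, hC.top_mem, by rwa [finrank_top]⟩
    refine ⟨b, hbC, le_antisymm ?_ hab⟩
    by_contra! hgap
    obtain ⟨x, hax, hxb⟩ :=
      exists_lt_lt_of_finrank_add_one_lt (hC.1.le_of_finrank_le haC hbC hab.le) hgap
    have hxC : x ∈ C := hC.mem_of_forall_rel_or_rel fun c hc => by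
      rcases le_or_gt (finrank K c) (finrank K a) with hca | hac
      · exact Or.inr ((hC.1.le_of_finrank_le hc haC hca).trans hax.le)
      · exact Or.inl (hxb.le.trans (hC.1.le_of_finrank_le hbC hc (not_lt.1 (hmin c ⟨hc, hac⟩))))
    exact hmin x ⟨hxC, finrank_lt_finrank_of_lt hax⟩ (finrank_lt_finrank_of_lt hxb)

end Chain

section Flag

variable {𝕜 E : Type*} [RCLike 𝕜] [NormedAddCommGroup E] [InnerProductSpace 𝕜 E]

theorem Submodule.finsetSup_range_orthogonal_inf_succ [FiniteDimensional 𝕜 E]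
    {V : ℕ → Submodule 𝕜 E} (hV : Monotone V) (h0 : V 0 = ⊥) (k : ℕ) :
    (Finset.range k).sup (fun i => (V i)ᗮ ⊓ V (i + 1)) = V k := by
  induction k with
  | zero => simp [h0]
  | succ k ih =>
    rw [Finset.range_add_one, Finset.sup_insert, ih, sup_comm,
      sup_orthogonal_inf_of_hasOrthogonalProjection (hV k.le_succ)]

theorem IsMaxChain.exists_orthogonal_decomposition [FiniteDimensional 𝕜 E]
    {C : Set (Submodule 𝕜 E)} (hC : IsMaxChain (· ≤ ·) C) :
    ∃ e : Fin (finrank 𝕜 E) → Submodule 𝕜 E, (Pairwise fun i j => e i ⟂ e j) ∧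
      Finset.univ.sup e = ⊤ ∧
      ∀ i, ∃ a ∈ C, ∃ b ∈ C, a ≤ b ∧ finrank 𝕜 b = finrank 𝕜 a + 1 ∧ e i = aᗮ ⊓ b := by
  set n := finrank 𝕜 E
  choose V hVC hV using fun k => hC.exists_finrank_eq (min k n) (min_le_right k n)
  have hVmono : Monotone V := fun j k hjk =>
    hC.1.le_of_finrank_le (hVC j) (hVC k) (by rw [hV, hV]; omega)
  have hlt : ∀ i j : ℕ, i < j → (V j)ᗮ ⊓ V (j + 1) ⟂ (V i)ᗮ ⊓ V (i + 1) := fun i j hij =>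
    (isOrtho_orthogonal_left (V j)).mono inf_le_left (inf_le_right.trans (hVmono hij))
  refine ⟨fun i => (V i)ᗮ ⊓ V (i + 1), fun i j hij => ?_, ?_, fun i =>
    ⟨V i, hVC i, V (i + 1), hVC (i + 1), hVmono i.val.le_succ, by rw [hV, hV]; omega, rfl⟩⟩
  · rcases lt_or_gt_of_ne (Fin.val_ne_of_ne hij) with h | h
    exacts [(hlt i j h).symm, hlt j i h]
  · have h0 : V 0 = ⊥ := finrank_eq_zero.1 (by rw [hV]; rfl)
    rw [← eq_top_of_finrank_eq ((hV n).trans (min_self n)),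
      ← finsetSup_range_orthogonal_inf_succ hVmono h0 n, ← Nat.Iio_eq_range,
      ← Fin.map_valEmbedding_univ, Finset.sup_map]
    rfl

end Flag

section Decomposition

variable {𝕜 E ι : Type*} [RCLike 𝕜] [NormedAddCommGroup E] [InnerProductSpace 𝕜 E]
  [Fintype ι] [DecidableEq ι] {e : ι → Submodule 𝕜 E}

theorem Submodule.orthogonal_finsetSup (he : Pairwise fun i j => e i ⟂ e j)
    (htop : Finset.univ.sup e = ⊤) (S : Finset ι) : (S.sup e)ᗮ = Sᶜ.sup e := by
  have hle : Sᶜ.sup e ≤ (S.sup e)ᗮ := Finset.sup_le fun j hj =>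
    (isOrtho_iff_le.2 <| Finset.sup_le fun i hi =>
      (he (ne_of_mem_of_not_mem hi (Finset.mem_compl.1 hj))).le).symm.le
  calc (S.sup e)ᗮ = (Sᶜ.sup e ⊔ S.sup e) ⊓ (S.sup e)ᗮ := by
        rw [sup_comm, ← Finset.sup_union, Finset.union_compl, htop, top_inf_eq]
    _ = Sᶜ.sup e := by rw [sup_inf_assoc_of_le _ hle, inf_orthogonal_eq_bot, sup_bot_eq]

theorem Submodule.finsetSup_inf_finsetSup (he : Pairwise fun i j => e i ⟂ e j)
    (htop : Finset.univ.sup e = ⊤) (S T : Finset ι) : S.sup e ⊓ T.sup e = (S ∩ T).sup e := by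
  calc S.sup e ⊓ T.sup e = (Sᶜ.sup e)ᗮ ⊓ (Tᶜ.sup e)ᗮ := by
        rw [orthogonal_finsetSup he htop, orthogonal_finsetSup he htop, compl_compl, compl_compl]
    _ = (S ∩ T).sup e := by
        rw [inf_orthogonal, ← Finset.sup_union, orthogonal_finsetSup he htop, Finset.compl_union,
          compl_compl, compl_compl]

theorem Submodule.mem_range_finsetSup_of_forall_le_or_le_orthogonal
    (he : Pairwise fun i j => e i ⟂ e j) (htop : Finset.univ.sup e = ⊤) {x : Submodule 𝕜 E}
    (hx : ∀ i, e i ≤ x ∨ e i ≤ xᗮ) : x ∈ Set.range fun S : Finset ι => S.sup e := by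
  classical
  set S := Finset.univ.filter fun i => e i ≤ x
  refine ⟨S, le_antisymm (Finset.sup_le fun i hi => (Finset.mem_filter.1 hi).2) ?_⟩
  have hSc : Sᶜ.sup e ≤ xᗮ := Finset.sup_le fun i hi =>
    (hx i).resolve_left (by simpa [S] using hi)
  calc x ≤ xᗮᗮ := le_orthogonal_orthogonal x
    _ ≤ (Sᶜ.sup e)ᗮ := orthogonal_le hSc
    _ = S.sup e := by rw [orthogonal_finsetSup he htop, compl_compl]

end Decomposition

section Commute

variable {𝕜 E : Type*} [RCLike 𝕜] [NormedAddCommGroup E] [InnerProductSpace 𝕜 E]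
  {x a b : Submodule 𝕜 E}

theorem Submodule.orthogonal_inf_le_orthogonal_of_inf_le (hb : x ⊓ b ⊔ xᗮ ⊓ b = b)
    (h : x ⊓ b ≤ a) : aᗮ ⊓ b ≤ xᗮ := by
  have hle : xᗮ ⊓ b ≤ (x ⊓ b)ᗮ := inf_le_left.trans (orthogonal_le inf_le_left)
  calc aᗮ ⊓ b ≤ (xᗮ ⊓ b ⊔ x ⊓ b) ⊓ (x ⊓ b)ᗮ := by
        rw [sup_comm, hb, inf_comm]; exact inf_le_inf_left b (orthogonal_le h)
    _ = xᗮ ⊓ b := by rw [sup_inf_assoc_of_le _ hle, inf_orthogonal_eq_bot, sup_bot_eq]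
    _ ≤ xᗮ := inf_le_left

variable [FiniteDimensional 𝕜 E]

theorem Submodule.finrank_inf_add_finrank_orthogonal_inf (hb : x ⊓ b ⊔ xᗮ ⊓ b = b) :
    finrank 𝕜 ↥(x ⊓ b) + finrank 𝕜 ↥(xᗮ ⊓ b) = finrank 𝕜 b := by
  have hdisj : x ⊓ b ⊓ (xᗮ ⊓ b) = ⊥ :=
    ((orthogonal_disjoint x).mono inf_le_left inf_le_left).eq_bot
  rw [← finrank_sup_add_finrank_inf_eq, hdisj, finrank_bot, add_zero, hb]

theorem Submodule.orthogonal_inf_le_or_le_orthogonal (hab : a ≤ b)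
    (hrank : finrank 𝕜 b = finrank 𝕜 a + 1) (ha : x ⊓ a ⊔ xᗮ ⊓ a = a)
    (hb : x ⊓ b ⊔ xᗮ ⊓ b = b) : aᗮ ⊓ b ≤ x ∨ aᗮ ⊓ b ≤ xᗮ := by
  have hx := finrank_mono (inf_le_inf_left x hab)
  have hxo := finrank_mono (inf_le_inf_left xᗮ hab)
  have hsum_a := finrank_inf_add_finrank_orthogonal_inf ha
  have hsum_b := finrank_inf_add_finrank_orthogonal_inf hb
  by_cases h : finrank 𝕜 ↥(x ⊓ b) ≤ finrank 𝕜 ↥(x ⊓ a)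
  · right
    exact orthogonal_inf_le_orthogonal_of_inf_le hb
      ((eq_of_le_of_finrank_le (inf_le_inf_left x hab) h).ge.trans inf_le_right)
  · left
    have hb' : xᗮ ⊓ b ⊔ xᗮᗮ ⊓ b = b := by rw [orthogonal_orthogonal, sup_comm, hb]
    have heq := eq_of_le_of_finrank_le (inf_le_inf_left xᗮ hab) (by omega)
    simpa only [orthogonal_orthogonal] using
      orthogonal_inf_le_orthogonal_of_inf_le hb' (heq.ge.trans inf_le_right)

end Commute

section BooleanSublattice

variable {H : Type*} [NormedAddCommGroup H] [InnerProductSpace ℂ H]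

theorem isBooleanSublattice_range_finsetSup {ι : Type*} [Fintype ι] [DecidableEq ι]
    {e : ι → Submodule ℂ H} (he : Pairwise fun i j => e i ⟂ e j) (htop : Finset.univ.sup e = ⊤) :
    IsBooleanSublattice (Set.range fun S : Finset ι => S.sup e) := by
  refine ⟨⟨∅, Finset.sup_empty⟩, ⟨Finset.univ, htop⟩, ?_, ?_, ?_, ?_⟩
  · rintro _ ⟨S, rfl⟩ _ ⟨T, rfl⟩
    exact ⟨S ∩ T, (finsetSup_inf_finsetSup he htop S T).symm⟩
  · rintro _ ⟨S, rfl⟩ _ ⟨T, rfl⟩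
    exact ⟨S ∪ T, Finset.sup_union⟩
  · rintro _ ⟨S, rfl⟩
    exact ⟨Sᶜ, (orthogonal_finsetSup he htop S).symm⟩
  · rintro _ ⟨S, rfl⟩ _ ⟨T, rfl⟩ _ ⟨U, rfl⟩
    simp only [← Finset.sup_union, finsetSup_inf_finsetSup he htop, Finset.inter_union_distrib_left]

theorem IsBooleanSublattice.latticeClosure_subset {B s : Set (Submodule ℂ H)}
    (hB : IsBooleanSublattice B) (hs : s ⊆ B) : {x | LatticeClosure s x} ⊆ B := by
  intro x hx
  induction hx with
  | base x hx => exact hs hx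
  | inf x y _ _ hx hy => exact hB.2.2.1 x hx y hy
  | sup x y _ _ hx hy => exact hB.2.2.2.1 x hx y hy

variable [FiniteDimensional ℂ H]

theorem IsChain.subset_centralizer {C : Set (Submodule ℂ H)} (hC : IsChain (· ≤ ·) C) :
    C ⊆ Centralizer C := by
  intro x hx a ha
  rcases hC.total hx ha with hxa | hax
  · rw [inf_eq_left.2 hxa, sup_orthogonal_inf_of_hasOrthogonalProjection hxa]
  · rw [inf_eq_right.2 hax, sup_eq_left.2 inf_le_right]

theorem IsBooleanSublattice.subset_centralizer {B : Set (Submodule ℂ H)}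
    (hB : IsBooleanSublattice B) : B ⊆ Centralizer B := fun x hx a ha => by
  have := hB.2.2.2.2.2 a ha x hx xᗮ (hB.2.2.2.2.1 x hx)
  rwa [sup_orthogonal_of_hasOrthogonalProjection, inf_top_eq, inf_comm a, inf_comm a,
    eq_comm] at this

end BooleanSublattice

/-- Starting from a maximal chain `C` in `Submodule ℂ H`, closing `C ∪ Cent(C)` under
finite meets and joins to get `L_C`, and then closing `L_C ∪ {yᗮ | y ∈ L_C}` under
finite meets and joins, yields a maximal Boolean sublattice `B_C` of `Submodule ℂ H`. -/
theorem maximalChain_generates_maximalBooleanSublattice {H : Type*}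
    [NormedAddCommGroup H] [InnerProductSpace ℂ H] [FiniteDimensional ℂ H]
    (C : Set (Submodule ℂ H)) (hC : IsMaxChain (· ≤ ·) C) :
    IsMaximalBooleanSublattice
      {x | LatticeClosure
        ({y | LatticeClosure (C ∪ Centralizer C) y} ∪
          {y | ∃ z, LatticeClosure (C ∪ Centralizer C) z ∧ y = zᗮ}) x} := by
  obtain ⟨e, he, htop, hsteps⟩ := hC.exists_orthogonal_decomposition
  set D := Set.range fun S : Finset (Fin (finrank ℂ H)) => S.sup e
  have hD : IsBooleanSublattice D := isBooleanSublattice_range_finsetSup he htop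
  have hcent : Centralizer C ⊆ D := fun x hx =>
    mem_range_finsetSup_of_forall_le_or_le_orthogonal he htop fun i => by
      obtain ⟨a, ha, b, hb, hab, hrank, hi⟩ := hsteps i
      exact hi ▸ orthogonal_inf_le_or_le_orthogonal hab hrank (hx a ha) (hx b hb)
  have hCD := hC.isChain.subset_centralizer.trans hcent
  have hLD := hD.latticeClosure_subset (Set.union_subset hCD hcent)
  have hmax : IsMaximalBooleanSublattice D := by
    refine ⟨hD, fun B hB hDB => Set.Subset.antisymm ?_ hDB⟩
    exact fun x hx => hcent fun a ha => hB.subset_centralizer hx a (hDB (hCD ha))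
  convert hmax using 1
  refine (hD.latticeClosure_subset (Set.union_subset hLD ?_)).antisymm ?_
  · rintro _ ⟨z, hz, rfl⟩
    exact hD.2.2.2.2.1 z (hLD hz)
  · rintro _ ⟨S, rfl⟩
    refine Finset.sup_induction (.base _ (Or.inl (.base _ (Or.inl hC.bot_mem))))
      (fun _ h₁ _ h₂ => .sup _ _ h₁ h₂) fun i _ => ?_
    obtain ⟨a, ha, b, hb, -, -, hi⟩ := hsteps i
    rw [hi]
    exact .inf _ _ (.base _ (Or.inr ⟨a, .base _ (Or.inl ha), rfl⟩))
      (.base _ (Or.inl (.base _ (Or.inl hb))))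
end

section
/- Let H be a finite-dimensional complex inner product space and let x, a be subspaces of H. Then (x ⊓ a) ⊔ (xᗮ ⊓ a) = a holds if and only if the orthogonal projections of H onto x and onto a commute as linear maps. -/
open Submodule

/-!
Both conditions say that `a` is invariant under the orthogonal projection `P` onto `x`. The
lattice identity holds exactly when every `v ∈ a` splits as `P v + (v - P v)` inside `a`. An
orthogonal projection commutes with a self-adjoint operator exactly when its range and its kernel
are invariant, and for a self-adjoint operator the kernel `aᗮ` is invariant once the range `a` is.
-/

namespace Submodule

variable {𝕜 E : Type*} [RCLike 𝕜] [NormedAddCommGroup E] [InnerProductSpace 𝕜 E]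

theorem inf_sup_orthogonal_inf_eq_iff_mem_invtSubmodule (K U : Submodule 𝕜 E)
    [K.HasOrthogonalProjection] :
    (K ⊓ U) ⊔ (Kᗮ ⊓ U) = U ↔ U ∈ Module.End.invtSubmodule (K.starProjection : E →ₗ[𝕜] E) := by
  rw [Module.End.mem_invtSubmodule_iff_forall_mem_of_mem]
  constructor
  · intro hU v hv
    rw [← hU] at hv
    obtain ⟨u, hu, w, hw, rfl⟩ := mem_sup.mp hv
    have hPu : K.starProjection u = u := starProjection_eq_self_iff.mpr hu.1
    have hPw : K.starProjection w = 0 := (starProjection_apply_eq_zero_iff K).mpr hw.1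
    simpa [hPu, hPw] using hu.2
  · intro hU
    refine le_antisymm (sup_le inf_le_right inf_le_right) fun v hv ↦ ?_
    rw [← add_sub_cancel (K.starProjection v) v]
    exact add_mem_sup ⟨starProjection_apply_mem K v, hU v hv⟩
      ⟨sub_starProjection_mem_orthogonal v, sub_mem hv (hU v hv)⟩

theorem commute_starProjection_iff_mem_invtSubmodule {T : E →ₗ[𝕜] E} (hT : T.IsSymmetric)
    (U : Submodule 𝕜 E) [U.HasOrthogonalProjection] :
    Commute (U.starProjection : E →ₗ[𝕜] E) T ↔ U ∈ Module.End.invtSubmodule T := by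
  rw [LinearMap.IsIdempotentElem.commute_iff
      (ContinuousLinearMap.IsIdempotentElem.toLinearMap U.isIdempotentElem_starProjection),
    range_starProjection, ker_starProjection]
  exact ⟨And.left, fun hU ↦ ⟨hU, hT.orthogonalComplement_mem_invtSubmodule hU⟩⟩

end Submodule

/-- Two subspaces `x`, `a` of a finite-dimensional complex inner product space satisfy
the lattice-theoretic commutation relation `(x ⊓ a) ⊔ (xᗮ ⊓ a) = a` if and only if
the orthogonal projections onto `x` and onto `a` commute as linear maps on `H`. -/
theorem commutes_iff_projections_commute {H : Type*}
    [NormedAddCommGroup H] [InnerProductSpace ℂ H] [FiniteDimensional ℂ H]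
    (x a : Submodule ℂ H) :
    (x ⊓ a) ⊔ (xᗮ ⊓ a) = a ↔
      ∀ h : H,
        ((orthogonalProjection x (((orthogonalProjection a h : a) : H)) : x) : H) =
        ((orthogonalProjection a (((orthogonalProjection x h : x) : H)) : a) : H) := by
  rw [inf_sup_orthogonal_inf_eq_iff_mem_invtSubmodule,
    ← commute_starProjection_iff_mem_invtSubmodule x.starProjection_isSymmetric, commute_iff_eq,
    LinearMap.ext_iff]
  simp only [Module.End.mul_apply, ContinuousLinearMap.coe_coe, starProjection_apply, eq_comm]
end

section
/- Let H be a finite-dimensional complex inner product space and let x, y, z be subspaces of H that pairwise commute, i.e., (u ⊓ w) ⊔ (uᗮ ⊓ w) = w holds for each pair (u, w) among (x,y), (x,z), (y,z) and their transposes. Then the distributive law x ⊓ (y ⊔ z) = (x ⊓ y) ⊔ (x ⊓ z) holds. -/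
open Submodule

/-- If three subspaces `x`, `y`, `z` of a finite-dimensional complex inner product space
pairwise commute (in the sense `(u ⊓ w) ⊔ (uᗮ ⊓ w) = w` for each ordered pair among
them), then the distributive law `x ⊓ (y ⊔ z) = (x ⊓ y) ⊔ (x ⊓ z)` holds. -/
theorem distrib_of_pairwise_commuting {H : Type*}
    [NormedAddCommGroup H] [InnerProductSpace ℂ H] [FiniteDimensional ℂ H]
    (x y z : Submodule ℂ H)
    (hxy : (x ⊓ y) ⊔ (xᗮ ⊓ y) = y) (hyx : (y ⊓ x) ⊔ (yᗮ ⊓ x) = x)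
    (hxz : (x ⊓ z) ⊔ (xᗮ ⊓ z) = z) (hzx : (z ⊓ x) ⊔ (zᗮ ⊓ x) = x)
    (hyz : (y ⊓ z) ⊔ (yᗮ ⊓ z) = z) (hzy : (z ⊓ y) ⊔ (zᗮ ⊓ y) = y) :
    x ⊓ (y ⊔ z) = (x ⊓ y) ⊔ (x ⊓ z) := by
  refine le_antisymm ?_ (sup_le (inf_le_inf_left x le_sup_left)
    (inf_le_inf_left x le_sup_right))
  intro v hv
  obtain ⟨hvx, hvyz⟩ := hv
  have hvyz' : v ∈ ((x ⊓ y) ⊔ (x ⊓ z)) ⊔ ((xᗮ ⊓ y) ⊔ (xᗮ ⊓ z)) := by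
    rw [sup_sup_sup_comm, hxy, hxz]; exact hvyz
  obtain ⟨p, hp, q, hq, hpq⟩ := Submodule.mem_sup.mp hvyz'
  have hd : (x ⊓ y) ⊔ (x ⊓ z) ≤ x := sup_le inf_le_left inf_le_left
  have he : (xᗮ ⊓ y) ⊔ (xᗮ ⊓ z) ≤ xᗮ := sup_le inf_le_left inf_le_left
  have hqx : q ∈ x := by
    have : q = v - p := by rw [← hpq]; abel
    rw [this]; exact x.sub_mem hvx (hd hp)
  have hq0 : q = 0 := by
    have := (Submodule.orthogonal_disjoint x).le_bot ⟨hqx, he hq⟩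
    simpa using this
  rw [← hpq, hq0, add_zero]
  exact hp
end
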